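/- arXiv:1609.05840 — 9 statements merged into one kernel-verified Lean document; each statement's English description precedes it below -/
import Mathlib

section
/- Let S ∈ ℝ^{n×n} be an invertible matrix such that S A S⁻¹ = blockdiag(A_r, A_s) and C S⁻¹ = [C_r C_s], where A_r ∈ ℝ^{r×r} is invertible and A_s ∈ ℝ^{(n−r)×(n−r)} is nilpotent. Then (A,C,𝒜) is constructible if and only if (A_r, C_r, 𝒜) is observable; moreover (A,C,𝒜) is practically constructible if and only if (A_r, C_r, 𝒜) is practically observable. -/
open Matrix Filter

/-- An automaton `𝒜 = (M, s)` with `N` nodes: transition matrix `M ∈ {0,1}^{N×N}`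
and vector of node labels `s ∈ {0,1}^N`. -/
structure Automaton (N : ℕ) where
  M : Matrix (Fin N) (Fin N) Bool
  s : Fin N → Bool

/-- `σ ∈ ℒ(𝒜)`: the data loss signal `σ` is admissible with respect to `𝒜`. -/
def Automaton.Admissible {N : ℕ} (𝒜 : Automaton N) (σ : ℕ → Bool) : Prop :=
  ∃ v : ℕ → Fin N, ∀ t : ℕ, 𝒜.M (v t) (v (t + 1)) = true ∧ σ t = 𝒜.s (v t)

/-- A finite word of length `r` generated by `𝒜` (only the first `r` letters of `w` matter). -/
def Automaton.AdmissibleWord {N : ℕ} (𝒜 : Automaton N) (r : ℕ) (w : ℕ → Bool) : Prop :=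
  ∃ v : ℕ → Fin N, (∀ t : ℕ, t + 1 < r → 𝒜.M (v t) (v (t + 1)) = true) ∧
    ∀ t : ℕ, t < r → w t = 𝒜.s (v t)

/-- The reverse automaton `𝒜ʳ = (Mᵀ, s)`. -/
def Automaton.rev {N : ℕ} (𝒜 : Automaton N) : Automaton N :=
  ⟨𝒜.M.transpose, 𝒜.s⟩

/-- Observability of the system `(A, C, 𝒜)`. -/
def Observable {N n p : ℕ} (A : Matrix (Fin n) (Fin n) ℝ) (C : Matrix (Fin p) (Fin n) ℝ)
    (𝒜 : Automaton N) : Prop :=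
  ∀ σ : ℕ → Bool, 𝒜.Admissible σ → ∀ x₀ : Fin n → ℝ,
    (∀ t : ℕ, σ t = true → (C * A ^ t).mulVec x₀ = 0) → x₀ = 0

/-- Practical observability of the system `(A, C, 𝒜)`. -/
def PracticallyObservable {N n p : ℕ} (A : Matrix (Fin n) (Fin n) ℝ)
    (C : Matrix (Fin p) (Fin n) ℝ) (𝒜 : Automaton N) : Prop :=
  ∃ T : ℕ, ∀ σ : ℕ → Bool, 𝒜.Admissible σ → ∀ x₀ : Fin n → ℝ,
    (∀ t : ℕ, t ≤ T → σ t = true → (C * A ^ t).mulVec x₀ = 0) → x₀ = 0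

/-- Constructibility of the system `(A, C, 𝒜)`. -/
def Constructible {N n p : ℕ} (A : Matrix (Fin n) (Fin n) ℝ) (C : Matrix (Fin p) (Fin n) ℝ)
    (𝒜 : Automaton N) : Prop :=
  ∀ σ : ℕ → Bool, 𝒜.Admissible σ → ∃ T : ℕ, ∀ x₀ : Fin n → ℝ,
    (∀ t : ℕ, t ≤ T → σ t = true → (C * A ^ t).mulVec x₀ = 0) → (A ^ T).mulVec x₀ = 0

/-- Practical constructibility of the system `(A, C, 𝒜)`. -/
def PracticallyConstructible {N n p : ℕ} (A : Matrix (Fin n) (Fin n) ℝ)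
    (C : Matrix (Fin p) (Fin n) ℝ) (𝒜 : Automaton N) : Prop :=
  ∃ T : ℕ, ∀ σ : ℕ → Bool, 𝒜.Admissible σ → ∀ x₀ : Fin n → ℝ,
    (∀ t : ℕ, t ≤ T → σ t = true → (C * A ^ t).mulVec x₀ = 0) → (A ^ T).mulVec x₀ = 0

/-- Detectability of the system `(A, C, 𝒜)`. -/
def Detectable {N n p : ℕ} (A : Matrix (Fin n) (Fin n) ℝ) (C : Matrix (Fin p) (Fin n) ℝ)
    (𝒜 : Automaton N) : Prop :=
  ∀ σ : ℕ → Bool, 𝒜.Admissible σ → ∀ x₀ : Fin n → ℝ,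
    (∀ t : ℕ, σ t = true → (C * A ^ t).mulVec x₀ = 0) →
      Tendsto (fun t : ℕ => (A ^ t).mulVec x₀) atTop (nhds 0)

/-- The observability matrix `O_σ(t) = [σ(0)C; σ(1)CA; ...; σ(t−1)CA^{t−1}]`
(blocks stacked vertically, block `i` is row-block `i`). -/
def obsMat {n p : ℕ} (A : Matrix (Fin n) (Fin n) ℝ) (C : Matrix (Fin p) (Fin n) ℝ)
    (σ : ℕ → Bool) (t : ℕ) : Matrix (Fin t × Fin p) (Fin n) ℝ :=
  fun ij k => if σ (ij.1 : ℕ) then (C * A ^ (ij.1 : ℕ)) ij.2 k else 0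

/-- State trajectory of the system `x(t+1) = A x(t) + σ(t) B u(t)`. -/
def traj {n m : ℕ} (A : Matrix (Fin n) (Fin n) ℝ) (B : Matrix (Fin n) (Fin m) ℝ)
    (σ : ℕ → Bool) (u : ℕ → Fin m → ℝ) (x₀ : Fin n → ℝ) : ℕ → Fin n → ℝ
  | 0 => x₀
  | t + 1 => A.mulVec (traj A B σ u x₀ t) + if σ t then B.mulVec (u t) else 0

/-- Controllability of the system `(A, B, 𝒜)`. -/
def Controllable {N n m : ℕ} (A : Matrix (Fin n) (Fin n) ℝ) (B : Matrix (Fin n) (Fin m) ℝ)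
    (𝒜 : Automaton N) : Prop :=
  ∀ σ : ℕ → Bool, 𝒜.Admissible σ → ∀ x₀ xf : Fin n → ℝ,
    ∃ u : ℕ → Fin m → ℝ, ∃ T : ℕ, traj A B σ u x₀ T = xf

/-- Reachability of the system `(A, B, 𝒜)`. -/
def Reachable {N n m : ℕ} (A : Matrix (Fin n) (Fin n) ℝ) (B : Matrix (Fin n) (Fin m) ℝ)
    (𝒜 : Automaton N) : Prop :=
  ∀ σ : ℕ → Bool, 𝒜.Admissible σ → ∀ xf : Fin n → ℝ,
    ∃ u : ℕ → Fin m → ℝ, ∃ T : ℕ, traj A B σ u 0 T = xf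

/-- 0-controllability of the system `(A, B, 𝒜)`. -/
def ZeroControllable {N n m : ℕ} (A : Matrix (Fin n) (Fin n) ℝ) (B : Matrix (Fin n) (Fin m) ℝ)
    (𝒜 : Automaton N) : Prop :=
  ∀ σ : ℕ → Bool, 𝒜.Admissible σ → ∀ x₀ : Fin n → ℝ,
    ∃ u : ℕ → Fin m → ℝ, ∃ T : ℕ, traj A B σ u x₀ T = 0

/-- Stabilizability of the system `(A, B, 𝒜)`. -/
def Stabilizable {N n m : ℕ} (A : Matrix (Fin n) (Fin n) ℝ) (B : Matrix (Fin n) (Fin m) ℝ)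
    (𝒜 : Automaton N) : Prop :=
  ∀ σ : ℕ → Bool, 𝒜.Admissible σ → ∀ x₀ : Fin n → ℝ,
    ∃ u : ℕ → Fin m → ℝ, Tendsto (fun t : ℕ => traj A B σ u x₀ t) atTop (nhds 0)

/-- Practical controllability of the system `(A, B, 𝒜)`. -/
def PracticallyControllable {N n m : ℕ} (A : Matrix (Fin n) (Fin n) ℝ)
    (B : Matrix (Fin n) (Fin m) ℝ) (𝒜 : Automaton N) : Prop :=
  ∃ T : ℕ, ∀ σ : ℕ → Bool, 𝒜.Admissible σ → ∀ x₀ xf : Fin n → ℝ,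
    ∃ u : ℕ → Fin m → ℝ, ∃ t : ℕ, t ≤ T ∧ traj A B σ u x₀ t = xf

/-- Practical reachability of the system `(A, B, 𝒜)`. -/
def PracticallyReachable {N n m : ℕ} (A : Matrix (Fin n) (Fin n) ℝ)
    (B : Matrix (Fin n) (Fin m) ℝ) (𝒜 : Automaton N) : Prop :=
  ∃ T : ℕ, ∀ σ : ℕ → Bool, 𝒜.Admissible σ → ∀ xf : Fin n → ℝ,
    ∃ u : ℕ → Fin m → ℝ, ∃ t : ℕ, t ≤ T ∧ traj A B σ u 0 t = xf

/-- Practical 0-controllability of the system `(A, B, 𝒜)`. -/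
def PracticallyZeroControllable {N n m : ℕ} (A : Matrix (Fin n) (Fin n) ℝ)
    (B : Matrix (Fin n) (Fin m) ℝ) (𝒜 : Automaton N) : Prop :=
  ∃ T : ℕ, ∀ σ : ℕ → Bool, 𝒜.Admissible σ → ∀ x₀ : Fin n → ℝ,
    ∃ u : ℕ → Fin m → ℝ, ∃ t : ℕ, t ≤ T ∧ traj A B σ u x₀ t = 0

/-- The reachability matrix `C_σ(t) = [σ(t−1)B, σ(t−2)AB, ..., σ(0)A^{t−1}B]`
(block-column `i` is `σ(t−1−i) Aⁱ B`). -/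
def reachMat {n m : ℕ} (A : Matrix (Fin n) (Fin n) ℝ) (B : Matrix (Fin n) (Fin m) ℝ)
    (σ : ℕ → Bool) (t : ℕ) : Matrix (Fin n) (Fin t × Fin m) ℝ :=
  fun k ij => if σ (t - 1 - (ij.1 : ℕ)) then (A ^ (ij.1 : ℕ) * B) k ij.2 else 0

/-- State trajectory of the system with varying delays
`x(t+1) = A x(t) + Σ_{t' ≤ t, t' + d(t') = t} B u(t')`. -/
def delayTraj {n m : ℕ} (A : Matrix (Fin n) (Fin n) ℝ) (B : Matrix (Fin n) (Fin m) ℝ)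
    (d : ℕ → ℕ) (u : ℕ → Fin m → ℝ) (x₀ : Fin n → ℝ) : ℕ → Fin n → ℝ
  | 0 => x₀
  | t + 1 => A.mulVec (delayTraj A B d u x₀ t) +
      ∑ t' ∈ Finset.range (t + 1), if t' + d t' = t then B.mulVec (u t') else 0

/-- Controllability of the system with varying delays `(A, B, 𝒟)`. -/
def DelayControllable {n m : ℕ} (A : Matrix (Fin n) (Fin n) ℝ) (B : Matrix (Fin n) (Fin m) ℝ)
    (𝒟 : Finset ℕ) : Prop :=
  ∀ d : ℕ → ℕ, (∀ t : ℕ, d t ∈ 𝒟) → ∀ x₀ xf : Fin n → ℝ,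
    ∃ u : ℕ → Fin m → ℝ, ∃ T : ℕ, delayTraj A B d u x₀ T = xf

/-- The controllability matrix `C̄_d(t)` of a system with varying delays: its `i`-th
block column (here indexed by `j = i - 1 : Fin t`) is `A^{t−i−d(i−1)} B` when
`i + d(i−1) ≤ t`, and the zero block otherwise. -/
def delayCtrbMat {n m : ℕ} (A : Matrix (Fin n) (Fin n) ℝ) (B : Matrix (Fin n) (Fin m) ℝ)
    (d : ℕ → ℕ) (t : ℕ) : Matrix (Fin n) (Fin t × Fin m) ℝ :=
  fun k jl => if (jl.1 : ℕ) + 1 + d (jl.1 : ℕ) ≤ t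
    then (A ^ (t - ((jl.1 : ℕ) + 1) - d (jl.1 : ℕ)) * B) k jl.2 else 0

-- The actuation signal `τ_d` of a delay signal `d`: `τ_d(t) = 1` iff there is
-- `t'` with `t' + d(t') = t`.
open Classical in
noncomputable def actuation (d : ℕ → ℕ) (t : ℕ) : Bool :=
  if ∃ t' : ℕ, t' + d t' = t then true else false

/-!
Write `S x = (y, z)`. Then `C Aᵗ x = C_r A_rᵗ y + C_s A_sᵗ z` and `S Aᵗ x = (A_rᵗ y, A_sᵗ z)`.
If `A_sᵐ = 0`, the outputs from time `m` on only see `A_rᵐ y`, and `A^{T+m} x = 0` as soon as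
`A_rᵐ y = 0`; so observing the regular part along the shifted signal `σ(· + m)`, which is again
admissible, makes the full system constructible with horizon `T + m`. Conversely, testing a
constructibility horizon `T` on the states `(y, 0)` gives `A_rᵀ y = 0`, hence `y = 0` since `A_r`
is invertible. An observable system is observable in finite time along each signal because the
decreasing chain of subspaces unobservable up to time `T` stabilises in finite dimension.
-/

lemma Automaton.Admissible.shift {N : ℕ} {𝒜 : Automaton N} {σ : ℕ → Bool}
    (h : 𝒜.Admissible σ) (m : ℕ) : 𝒜.Admissible (fun t => σ (t + m)) := by
  obtain ⟨v, hv⟩ := h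
  refine ⟨fun t => v (t + m), fun t => ⟨?_, (hv (t + m)).2⟩⟩
  simpa only [Nat.add_right_comm t m 1] using (hv (t + m)).1

theorem Submodule.exists_biInf_eq_bot_of_iInf_eq_bot {R M : Type*} [Ring R] [AddCommGroup M]
    [Module R M] [IsArtinian R M] (p : ℕ → Submodule R M) (h : ⨅ t, p t = ⊥) :
    ∃ T, ⨅ t ≤ T, p t = ⊥ := by
  let q : ℕ →o (Submodule R M)ᵒᵈ :=
    ⟨fun T => OrderDual.toDual (⨅ t ≤ T, p t), fun S T hST =>
      (biInf_mono fun t (ht : t ≤ S) => ht.trans hST : ⨅ t ≤ T, p t ≤ ⨅ t ≤ S, p t)⟩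
  obtain ⟨T, hT⟩ := IsArtinian.monotone_stabilizes q
  refine ⟨T, eq_bot_iff.2 (h ▸ le_iInf fun t => ?_)⟩
  calc ⨅ s ≤ T, p s = ⨅ s ≤ max t T, p s := hT _ (le_max_right t T)
    _ ≤ p t := biInf_le p (le_max_left t T)

section Horizon

variable {ι ο R : Type*} [Fintype ι] [DecidableEq ι]

def ObservableUpTo [Semiring R] (A : Matrix ι ι R) (C : Matrix ο ι R) (σ : ℕ → Bool)
    (T : ℕ) : Prop :=
  ∀ x : ι → R, (∀ t ≤ T, σ t = true → (C * A ^ t) *ᵥ x = 0) → x = 0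

def ConstructibleUpTo [Semiring R] (A : Matrix ι ι R) (C : Matrix ο ι R) (σ : ℕ → Bool)
    (T : ℕ) : Prop :=
  ∀ x : ι → R, (∀ t ≤ T, σ t = true → (C * A ^ t) *ᵥ x = 0) → (A ^ T) *ᵥ x = 0

theorem exists_observableUpTo [Field R] {A : Matrix ι ι R} {C : Matrix ο ι R}
    {σ : ℕ → Bool} (h : ∀ x : ι → R, (∀ t, σ t = true → (C * A ^ t) *ᵥ x = 0) → x = 0) :
    ∃ T, ObservableUpTo A C σ T := by
  let p (t : ℕ) : Submodule R (ι → R) := ⨅ (_ : σ t = true), LinearMap.ker (C * A ^ t).mulVecLin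
  have mem_p {t : ℕ} {x : ι → R} : x ∈ p t ↔ (σ t = true → (C * A ^ t) *ᵥ x = 0) := by
    simp [p, Submodule.mem_iInf]
  obtain ⟨T, hT⟩ := Submodule.exists_biInf_eq_bot_of_iInf_eq_bot p <|
    (Submodule.eq_bot_iff _).2 fun x hx => h x fun t => mem_p.1 (Submodule.mem_iInf _ |>.1 hx t)
  refine ⟨T, fun x hx => (Submodule.eq_bot_iff _).1 hT x ?_⟩
  simpa only [Submodule.mem_iInf, mem_p] using hx

theorem ConstructibleUpTo.conj [CommRing R] {A : Matrix ι ι R} {C : Matrix ο ι R}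
    {σ : ℕ → Bool} {T : ℕ} (h : ConstructibleUpTo A C σ T) {S : Matrix ι ι R}
    (hS : IsUnit S.det) : ConstructibleUpTo (S * A * S⁻¹) (C * S⁻¹) σ T := by
  have hpow (t : ℕ) : (S * A * S⁻¹) ^ t = S * A ^ t * S⁻¹ :=
    Units.conj_pow (nonsingInvUnit S hS) A t
  have hout (t : ℕ) : C * S⁻¹ * (S * A * S⁻¹) ^ t = C * A ^ t * S⁻¹ := by
    rw [hpow]
    simp only [Matrix.mul_assoc, nonsing_inv_mul_cancel_left _ _ hS]
  intro x hx
  have hx' := h (S⁻¹ *ᵥ x) fun t ht hσ => by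
    rw [mulVec_mulVec, ← hout]
    exact hx t ht hσ
  rw [hpow, ← mulVec_mulVec, ← mulVec_mulVec, hx', mulVec_zero]

theorem constructibleUpTo_conj_iff [CommRing R] {A : Matrix ι ι R} {C : Matrix ο ι R}
    {σ : ℕ → Bool} {T : ℕ} {S : Matrix ι ι R} (hS : IsUnit S.det) :
    ConstructibleUpTo (S * A * S⁻¹) (C * S⁻¹) σ T ↔ ConstructibleUpTo A C σ T := by
  refine ⟨fun h => ?_, fun h => h.conj hS⟩
  simpa [Matrix.mul_assoc, nonsing_inv_nonsing_inv S hS, hS] using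
    h.conj (isUnit_nonsing_inv_det S hS)

end Horizon

section BlockDiagonal

variable {ι α β ο R : Type*} [Fintype ι] [DecidableEq ι] [Fintype α] [DecidableEq α]
  [Fintype β] [DecidableEq β] [Semiring R]
  {Ar : Matrix α α R} {As : Matrix β β R} {Cr : Matrix ο α R} {Cs : Matrix ο β R} (e : ι ≃ α ⊕ β)

theorem submatrix_fromBlocks_diagonal_pow_mulVec (t : ℕ) (y : α → R) (z : β → R) :
    (fromBlocks Ar 0 0 As).submatrix e e ^ t *ᵥ (Sum.elim y z ∘ e) =
      Sum.elim (Ar ^ t *ᵥ y) (As ^ t *ᵥ z) ∘ e := by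
  induction t with
  | zero => simp
  | succ t ih =>
    simp [pow_succ', ← mulVec_mulVec, ih, submatrix_mulVec_equiv, fromBlocks_mulVec,
      Function.comp_assoc]

theorem fromCols_mul_fromBlocks_diagonal_pow_mulVec (t : ℕ) (y : α → R) (z : β → R) :
    ((fromCols Cr Cs).submatrix id e * (fromBlocks Ar 0 0 As).submatrix e e ^ t) *ᵥ
        (Sum.elim y z ∘ e) =
      (Cr * Ar ^ t) *ᵥ y + (Cs * As ^ t) *ᵥ z := by
  rw [← mulVec_mulVec, submatrix_fromBlocks_diagonal_pow_mulVec, submatrix_mulVec_equiv]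
  simp [fromCols_mulVec, mulVec_mulVec, Function.comp_assoc]

variable {e} {σ : ℕ → Bool} {T : ℕ}

theorem ConstructibleUpTo.observableUpTo_of_fromBlocks_diagonal
    (h : ConstructibleUpTo ((fromBlocks Ar 0 0 As).submatrix e e)
      ((fromCols Cr Cs).submatrix id e) σ T) (hAr : IsUnit Ar) :
    ObservableUpTo Ar Cr σ T := by
  intro y hy
  have hx := h (Sum.elim y 0 ∘ e) fun t ht hσ => by
    rw [fromCols_mul_fromBlocks_diagonal_pow_mulVec, hy t ht hσ]
    simp
  rw [submatrix_fromBlocks_diagonal_pow_mulVec, mulVec_zero] at hx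
  have hy' : Ar ^ T *ᵥ y = 0 := funext fun i => by simpa using congrFun hx (e.symm (Sum.inl i))
  exact mulVec_injective_of_isUnit (hAr.pow T) (by rw [hy', mulVec_zero])

theorem ObservableUpTo.constructibleUpTo_fromBlocks_diagonal {m : ℕ}
    (h : ObservableUpTo Ar Cr (fun t => σ (t + m)) T) (hm : As ^ m = 0) :
    ConstructibleUpTo ((fromBlocks Ar 0 0 As).submatrix e e)
      ((fromCols Cr Cs).submatrix id e) σ (T + m) := by
  intro x hx
  obtain ⟨y, z, rfl⟩ : ∃ y z, x = Sum.elim y z ∘ e :=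
    ⟨(x ∘ e.symm) ∘ Sum.inl, (x ∘ e.symm) ∘ Sum.inr, by
      rw [Sum.elim_comp_inl_inr, Function.comp_assoc, e.symm_comp_self, Function.comp_id]⟩
  have hy : Ar ^ m *ᵥ y = 0 := h _ fun t ht hσ => by
    have := hx (t + m) (by omega) hσ
    rwa [fromCols_mul_fromBlocks_diagonal_pow_mulVec, pow_add As, hm, mul_zero, Matrix.mul_zero,
      zero_mulVec, add_zero, pow_add, ← Matrix.mul_assoc, ← mulVec_mulVec] at this
  rw [submatrix_fromBlocks_diagonal_pow_mulVec, pow_add Ar, pow_add As, ← mulVec_mulVec, hy, hm]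
  simp

end BlockDiagonal

/-- With `S A S⁻¹ = blockdiag(A_r, A_s)`, `C S⁻¹ = [C_r  C_s]`, `A_r` invertible and
`A_s` nilpotent: `(A,C,𝒜)` is (practically) constructible iff `(A_r,C_r,𝒜)` is
(practically) observable. -/
theorem constructible_iff_regular_part_observable {N r k p : ℕ}
    (A : Matrix (Fin (r + k)) (Fin (r + k)) ℝ) (C : Matrix (Fin p) (Fin (r + k)) ℝ)
    (𝒜 : Automaton N) (S : Matrix (Fin (r + k)) (Fin (r + k)) ℝ) (hS : IsUnit S.det)
    (Ar : Matrix (Fin r) (Fin r) ℝ) (As : Matrix (Fin k) (Fin k) ℝ)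
    (Cr : Matrix (Fin p) (Fin r) ℝ) (Cs : Matrix (Fin p) (Fin k) ℝ)
    (hA : S * A * S⁻¹ =
      (Matrix.fromBlocks Ar 0 0 As).submatrix finSumFinEquiv.symm finSumFinEquiv.symm)
    (hC : C * S⁻¹ = (Matrix.fromCols Cr Cs).submatrix id finSumFinEquiv.symm)
    (hAr : IsUnit Ar.det) (hAs : IsNilpotent As) :
    (Constructible A C 𝒜 ↔ Observable Ar Cr 𝒜) ∧
    (PracticallyConstructible A C 𝒜 ↔ PracticallyObservable Ar Cr 𝒜) := by
  obtain ⟨m, hm⟩ := hAs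
  have fwd (σ : ℕ → Bool) (T : ℕ) (h : ConstructibleUpTo A C σ T) : ObservableUpTo Ar Cr σ T := by
    rw [← constructibleUpTo_conj_iff hS, hA, hC] at h
    exact h.observableUpTo_of_fromBlocks_diagonal ((isUnit_iff_isUnit_det Ar).2 hAr)
  have bwd (σ : ℕ → Bool) (T : ℕ) (h : ObservableUpTo Ar Cr (fun t => σ (t + m)) T) :
      ConstructibleUpTo A C σ (T + m) := by
    rw [← constructibleUpTo_conj_iff hS, hA, hC]
    exact h.constructibleUpTo_fromBlocks_diagonal hm
  refine ⟨⟨fun h σ hσ x hx => ?_, fun h σ hσ => ?_⟩, ⟨?_, ?_⟩⟩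
  · obtain ⟨T, hT⟩ := h σ hσ
    exact fwd σ T hT x fun t _ ht => hx t ht
  · obtain ⟨T, hT⟩ := exists_observableUpTo (h _ (hσ.shift m))
    exact ⟨T + m, bwd σ T hT⟩
  · rintro ⟨T, hT⟩
    exact ⟨T, fun σ hσ => fwd σ T (hT σ hσ)⟩
  · rintro ⟨T, hT⟩
    exact ⟨T + m, fun σ hσ => bwd σ T (hT _ (hσ.shift m))⟩
end

section
/- If the system (A,C,𝒜) is observable, then it is constructible. Moreover, if A is invertible, then (A,C,𝒜) is constructible if and only if it is observable. -/
open Matrix Filter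

/-! The states whose outputs along `σ` vanish up to time `T` form a decreasing chain of subspaces
of a finite-dimensional space, so the chain stabilizes at some `T`. Its value there is the space of
states whose whole output along `σ` vanishes, which observability makes trivial; so vanishing
outputs up to `T` force `x₀ = 0`, a fortiori `A ^ T *ᵥ x₀ = 0`. Conversely, for invertible `A` the
identity `A ^ T *ᵥ x₀ = 0` already forces `x₀ = 0`. -/

section UnobservableSubspace

variable {K : Type*} [Field K] {n p : ℕ}
  (A : Matrix (Fin n) (Fin n) K) (C : Matrix (Fin p) (Fin n) K) (σ : ℕ → Bool)

def unobservableSubspace (T : ℕ) : Submodule K (Fin n → K) :=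
  ⨅ (t : ℕ) (_ : t ≤ T) (_ : σ t = true), LinearMap.ker (C * A ^ t).mulVecLin

variable {A C σ} in
theorem mem_unobservableSubspace {T : ℕ} {x : Fin n → K} :
    x ∈ unobservableSubspace A C σ T ↔ ∀ t ≤ T, σ t = true → (C * A ^ t) *ᵥ x = 0 := by
  simp [unobservableSubspace]

theorem unobservableSubspace_antitone : Antitone (unobservableSubspace A C σ) :=
  fun _ _ hTT' _ hx => mem_unobservableSubspace.2 fun t ht =>
    mem_unobservableSubspace.1 hx t (ht.trans hTT')

theorem exists_unobservableSubspace_stabilizes :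
    ∃ T, ∀ T', T ≤ T' → unobservableSubspace A C σ T' = unobservableSubspace A C σ T := by
  obtain ⟨T, hT⟩ := IsArtinian.monotone_stabilizes
    (⟨fun T => OrderDual.toDual (unobservableSubspace A C σ T),
      (unobservableSubspace_antitone A C σ).dual_right⟩ : ℕ →o (Submodule K (Fin n → K))ᵒᵈ)
  exact ⟨T, fun T' h => (hT T' h).symm⟩

theorem exists_unobservableSubspace_eq_bot
    (hσ : ∀ x : Fin n → K, (∀ t, σ t = true → (C * A ^ t) *ᵥ x = 0) → x = 0) :
    ∃ T, unobservableSubspace A C σ T = ⊥ := by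
  obtain ⟨T, hT⟩ := exists_unobservableSubspace_stabilizes A C σ
  refine ⟨T, (Submodule.eq_bot_iff _).2 fun x hx => hσ x fun t ht => ?_⟩
  have hxT : x ∈ unobservableSubspace A C σ (max T t) := hT _ (le_max_left T t) ▸ hx
  exact mem_unobservableSubspace.1 hxT t (le_max_right T t) ht

end UnobservableSubspace

/-- If `(A,C,𝒜)` is observable then it is constructible; if moreover `A` is invertible,
constructibility and observability are equivalent. -/
theorem observable_implies_constructible {N n p : ℕ} (A : Matrix (Fin n) (Fin n) ℝ)
    (C : Matrix (Fin p) (Fin n) ℝ) (𝒜 : Automaton N) :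
    (Observable A C 𝒜 → Constructible A C 𝒜) ∧
    (IsUnit A.det → (Constructible A C 𝒜 ↔ Observable A C 𝒜)) := by
  have observable_constructible (hObs : Observable A C 𝒜) : Constructible A C 𝒜 := fun σ hσ => by
    obtain ⟨T, hT⟩ := exists_unobservableSubspace_eq_bot A C σ (hObs σ hσ)
    refine ⟨T, fun x hx => ?_⟩
    have hx0 : x = 0 := by simpa [hT] using mem_unobservableSubspace.2 hx
    rw [hx0, mulVec_zero]
  refine ⟨observable_constructible, fun hA => ⟨fun hCon σ hσ x hx => ?_, observable_constructible⟩⟩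
  obtain ⟨T, hT⟩ := hCon σ hσ
  have hAT : IsUnit (A ^ T) := ((isUnit_iff_isUnit_det A).2 hA).pow T
  exact mulVec_injective_of_isUnit hAT (by rw [hT x fun t _ => hx t, mulVec_zero])
end

section
/- The system (A,C,𝒜) is practically observable if and only if it is observable; likewise, (A,C,𝒜) is practically constructible if and only if it is constructible. -/
open Matrix Filter

open Set

/-!
A practical property trivially implies the asymptotic one. Conversely, both properties
are witnessed, for each signal `σ`, by a horizon `T` whose validity only depends on
`σ` on `[0, T]` and persists at larger horizons. Admissible signals are the label
sequences of infinite paths in a finite graph, so they form a compact set (König's lemma),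
and a compactness argument turns these signal-dependent horizons into a uniform one. For
observability the horizon exists because the unobservable subspaces of `σ` up to time `T`
form a decreasing chain in `ℝⁿ`, which stabilizes.
-/

theorem exists_frequently_eqOn_Iic {α : Type*} [Finite α] (f : ℕ → ℕ → α) :
    ∃ g : ℕ → α, ∀ T₀, ∃ᶠ T in atTop, EqOn (f T) g (Iic T₀) := by
  let : TopologicalSpace α := ⊥
  have : DiscreteTopology α := ⟨rfl⟩
  obtain ⟨g, hg⟩ := exists_clusterPt_of_compactSpace (map f atTop)
  refine ⟨g, fun T₀ => frequently_map.mp <| hg.frequently (p := fun h => EqOn h g (Iic T₀)) ?_⟩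
  exact set_pi_mem_nhds (s := fun t => {g t}) (finite_Iic T₀) fun t _ =>
    mem_nhds_discrete.mpr rfl

theorem Automaton.exists_admissible_frequently_eqOn_Iic {N : ℕ} (𝒜 : Automaton N)
    {σs : ℕ → ℕ → Bool} (h : ∀ T, 𝒜.Admissible (σs T)) :
    ∃ σ, 𝒜.Admissible σ ∧ ∀ T₀, ∃ᶠ T in atTop, EqOn (σs T) σ (Iic T₀) := by
  choose vs hvs using h
  obtain ⟨v, hv⟩ := exists_frequently_eqOn_Iic vs
  refine ⟨𝒜.s ∘ v, ⟨v, fun t => ⟨?_, rfl⟩⟩,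
    fun T₀ => (hv T₀).mono fun T hT t ht => ?_⟩
  · obtain ⟨T, hT⟩ := (hv (t + 1)).exists
    rw [← hT (mem_Iic.2 t.le_succ), ← hT (mem_Iic.2 le_rfl)]
    exact (hvs T t).1
  · rw [(hvs T t).2, Function.comp_apply, hT ht]

theorem Automaton.exists_forall_admissible_of_forall_exists {N : ℕ} (𝒜 : Automaton N)
    {P : (ℕ → Bool) → ℕ → Prop} (hmono : ∀ σ T T', T ≤ T' → P σ T → P σ T')
    (hlocal : ∀ σ σ' T, EqOn σ σ' (Iic T) → P σ T → P σ' T)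
    (h : ∀ σ, 𝒜.Admissible σ → ∃ T, P σ T) : ∃ T, ∀ σ, 𝒜.Admissible σ → P σ T := by
  by_contra! hP
  choose σs hadm hσs using hP
  obtain ⟨σ, hσ, hlim⟩ := 𝒜.exists_admissible_frequently_eqOn_Iic hadm
  obtain ⟨T₀, hT₀⟩ := h σ hσ
  obtain ⟨T, hT, heq⟩ := (hlim T₀).forall_exists_of_atTop T₀
  exact hσs T (hmono _ _ _ hT (hlocal σ _ _ heq.symm hT₀))

theorem Submodule.exists_biInf_le_eq_iInf {R M : Type*} [Semiring R] [AddCommMonoid M]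
    [Module R M] [IsArtinian R M] (K : ℕ → Submodule R M) : ∃ T, ⨅ t ≤ T, K t = ⨅ t, K t := by
  let W : ℕ →o (Submodule R M)ᵒᵈ :=
    ⟨fun T => OrderDual.toDual (⨅ t ≤ T, K t), fun T T' hle =>
      show ⨅ t ≤ T', K t ≤ ⨅ t ≤ T, K t from biInf_mono fun t (ht : t ≤ T) => ht.trans hle⟩
  obtain ⟨T, hT⟩ := IsArtinian.monotone_stabilizes W
  refine ⟨T, le_antisymm (le_iInf fun t => ?_) (iInf_mono fun t => le_iInf fun _ => le_rfl)⟩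
  calc ⨅ t ≤ T, K t = ⨅ t' ≤ max T t, K t' :=
        congrArg OrderDual.ofDual (hT _ (le_max_left T t))
    _ ≤ K t := biInf_le _ (le_max_right T t)

theorem Matrix.exists_forall_outputs_eq_zero_of_le {n p : ℕ} (A : Matrix (Fin n) (Fin n) ℝ)
    (C : Matrix (Fin p) (Fin n) ℝ) (σ : ℕ → Bool) :
    ∃ T, ∀ x : Fin n → ℝ, (∀ t ≤ T, σ t = true → (C * A ^ t) *ᵥ x = 0) →
      ∀ t, σ t = true → (C * A ^ t) *ᵥ x = 0 := by
  obtain ⟨T, hT⟩ := Submodule.exists_biInf_le_eq_iInf fun t =>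
    ⨅ _ : σ t = true, LinearMap.ker (C * A ^ t).mulVecLin
  refine ⟨T, fun x hx => ?_⟩
  have hmem : x ∈ ⨅ t ≤ T, ⨅ _ : σ t = true, LinearMap.ker (C * A ^ t).mulVecLin := by
    simpa [Submodule.mem_iInf] using hx
  rw [hT] at hmem
  simpa [Submodule.mem_iInf] using hmem

theorem Matrix.pow_mulVec_eq_zero_of_le {m R : Type*} [Fintype m] [DecidableEq m] [Semiring R]
    (A : Matrix m m R) {x : m → R} {a b : ℕ} (hab : a ≤ b) (h : A ^ a *ᵥ x = 0) :
    A ^ b *ᵥ x = 0 := by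
  rw [← Nat.sub_add_cancel hab, pow_add, ← mulVec_mulVec, h, mulVec_zero]

theorem Observable.exists_horizon {N n p : ℕ} {A : Matrix (Fin n) (Fin n) ℝ}
    {C : Matrix (Fin p) (Fin n) ℝ} {𝒜 : Automaton N} (hobs : Observable A C 𝒜)
    {σ : ℕ → Bool} (hσ : 𝒜.Admissible σ) :
    ∃ T, ∀ x : Fin n → ℝ, (∀ t ≤ T, σ t = true → (C * A ^ t) *ᵥ x = 0) → x = 0 := by
  obtain ⟨T, hT⟩ := exists_forall_outputs_eq_zero_of_le A C σ
  exact ⟨T, fun x hx => hobs σ hσ x (hT x hx)⟩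

/-- Practical observability is equivalent to observability, and practical
constructibility is equivalent to constructibility. -/
theorem practical_obs_constructible_iff {N n p : ℕ} (A : Matrix (Fin n) (Fin n) ℝ)
    (C : Matrix (Fin p) (Fin n) ℝ) (𝒜 : Automaton N) :
    (PracticallyObservable A C 𝒜 ↔ Observable A C 𝒜) ∧
    (PracticallyConstructible A C 𝒜 ↔ Constructible A C 𝒜) := by
  have vanish_congr : ∀ (σ σ' : ℕ → Bool) T, EqOn σ σ' (Iic T) → ∀ x : Fin n → ℝ,
      (∀ t ≤ T, σ' t = true → (C * A ^ t) *ᵥ x = 0) →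
        ∀ t ≤ T, σ t = true → (C * A ^ t) *ᵥ x = 0 :=
    fun σ σ' T heq x hx t ht hσt => hx t ht (heq (mem_Iic.2 ht) ▸ hσt)
  refine ⟨⟨fun ⟨T, h⟩ σ hσ x hx => h σ hσ x fun t _ => hx t, fun hobs => ?_⟩,
    ⟨fun ⟨T, h⟩ σ hσ => ⟨T, h σ hσ⟩, fun hcon => ?_⟩⟩
  · refine 𝒜.exists_forall_admissible_of_forall_exists ?_ ?_
      fun σ hσ => hobs.exists_horizon hσ
    · exact fun σ T T' hle h x hx => h x fun t ht => hx t (ht.trans hle)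
    · exact fun σ σ' T heq h x hx => h x (vanish_congr σ σ' T heq x hx)
  · refine 𝒜.exists_forall_admissible_of_forall_exists ?_ ?_ hcon
    · exact fun σ T T' hle h x hx =>
        pow_mulVec_eq_zero_of_le A hle (h x fun t ht => hx t (ht.trans hle))
    · exact fun σ σ' T heq h x hx => h x (vanish_congr σ σ' T heq x hx)
end

section
/- Suppose A ∈ ℝ^{n×n} is invertible and the system (A,C,𝒜) is unobservable. Then there exist an integer s ≥ 1 and a purely periodic admissible signal σ ∈ ℒ(𝒜) with period s (i.e., σ(t+s) = σ(t) for all t ∈ ℕ) such that the observability matrix O_σ(t) has rank strictly less than n for all t ∈ ℕ. -/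
open Matrix Filter

/-!
Say `x ∈ Y_k(q)` if along some path of `𝒜` of length `k` from `q` the output `C Aᵗ x` vanishes
at every observed time. Each `Y_k(q)` is a finite union of subspaces, hence Zariski closed, and
`Y_{k+1}(q) ⊆ Y_k(q)`, so by Noetherianity of `ℝ[x₁, …, xₙ]` the sets stabilise at some `Y(q)`.
Then `x ∈ Y(q)` forces `C x = 0` when `q` is observed, and `A x ∈ Y(q')` for a successor `q'`.
Over an infinite field a subspace covered by finitely many subspaces lies in one of them, so `A`
maps every component of `Y(q)` into a component of some `Y(q')`: this is a self-map of a finite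
set of pairs (node, component). The orbit of the pair containing the unobservable initial state
`x₀` eventually cycles, and the cycle is the periodic signal. `Aᵃ x₀` (with `a` the time the
cycle is entered) is nonzero because `A` is invertible, and lies in the kernel of every `O_σ(t)`.
-/

theorem Submodule.exists_le_of_coe_subset_iUnion {k E ι : Type*} [DivisionRing k] [Infinite k]
    [AddCommGroup E] [Module k E] [Finite ι] {p : ι → Submodule k E} {S : Submodule k E}
    (h : (S : Set E) ⊆ ⋃ i, (p i : Set E)) : ∃ i, S ≤ p i := by
  have hcovers : ⋃ i, ((p i).comap S.subtype : Set S) = Set.univ :=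
    Set.eq_univ_of_forall fun y => by simpa using h y.2
  obtain ⟨i, hi⟩ := Subspace.exists_eq_top_of_iUnion_eq_univ hcovers
  exact ⟨i, Submodule.comap_subtype_eq_top.mp hi⟩

namespace MvPolynomial

variable {K σ : Type*} [Field K]

theorem exists_aeval_eq_of_dual [Fintype σ] [DecidableEq σ] (f : Module.Dual K (σ → K)) :
    ∃ P : MvPolynomial σ K, ∀ y, aeval y P = f y := by
  refine ⟨∑ i, C (f (Pi.single i 1)) * X i, fun y => ?_⟩
  simp only [map_sum, map_mul, aeval_C, aeval_X, Algebra.algebraMap_self, RingHom.id_apply,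
    f.pi_apply_eq_sum_univ y, smul_eq_mul, mul_comm]
  congr! with i j
  simp [Pi.single_apply, eq_comm]

theorem zeroLocus_vanishingIdeal_biUnion_submodule [Fintype σ] {ι : Type*}
    (F : Finset ι) (p : ι → Submodule K (σ → K)) :
    zeroLocus K (vanishingIdeal K (⋃ i ∈ F, (p i : Set (σ → K)))) =
      ⋃ i ∈ F, (p i : Set (σ → K)) := by
  classical
  refine le_antisymm (fun x hx => ?_) (zeroLocus_vanishingIdeal_le _)
  by_contra hxU
  simp only [Set.mem_iUnion, SetLike.mem_coe, not_exists] at hxU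
  have hsep : ∀ i ∈ F, ∃ P : MvPolynomial σ K, aeval x P ≠ 0 ∧ ∀ y ∈ p i, aeval y P = 0 := by
    intro i hi
    obtain ⟨f, hfx, hfp⟩ := (p i).exists_dual_map_eq_bot_of_notMem (hxU i hi) inferInstance
    obtain ⟨P, hP⟩ := exists_aeval_eq_of_dual f
    refine ⟨P, by rwa [hP], fun y hy => ?_⟩
    rw [hP]
    exact (Submodule.mem_bot K).mp (hfp ▸ Submodule.mem_map_of_mem hy)
  choose! P hPx hPp using hsep
  have hmem : ∏ i ∈ F, P i ∈ vanishingIdeal K (⋃ i ∈ F, (p i : Set (σ → K))) := by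
    intro y hy
    simp only [Set.mem_iUnion, SetLike.mem_coe] at hy
    obtain ⟨i, hi, hyi⟩ := hy
    rw [map_prod]
    exact Finset.prod_eq_zero hi (hPp i hi y hyi)
  have := hx _ hmem
  rw [map_prod] at this
  exact Finset.prod_ne_zero_iff.mpr hPx this

theorem antitone_stabilizes_of_zeroLocus_vanishingIdeal_eq [Finite σ] {U : ℕ → Set (σ → K)}
    (hU : Antitone U) (hclosed : ∀ k, zeroLocus K (vanishingIdeal K (U k)) = U k) :
    ∃ T, ∀ k, T ≤ k → U k = U T := by
  let I : ℕ →o Ideal (MvPolynomial σ K) :=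
    ⟨fun k => vanishingIdeal K (U k), fun _ _ h => vanishingIdeal_anti_mono (hU h)⟩
  obtain ⟨T, hT⟩ := monotone_stabilizes_iff_noetherian.mpr inferInstance I
  exact ⟨T, fun k hk => by rw [← hclosed k, ← hclosed T]; exact congrArg _ (hT k hk).symm⟩

end MvPolynomial

theorem Function.exists_isPeriodicPt_iterate {α : Type*} [Finite α] (f : α → α) (x : α) :
    ∃ a s, 0 < s ∧ IsPeriodicPt f s (f^[a] x) := by
  obtain ⟨a, b, hab, h⟩ := Finite.exists_ne_map_eq_of_infinite fun t => f^[t] x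
  wlog hlt : a < b generalizing a b
  · exact this b a hab.symm h.symm (by omega)
  refine ⟨a, b - a, by omega, ?_⟩
  rw [IsPeriodicPt, IsFixedPt, ← Function.iterate_add_apply, Nat.sub_add_cancel hlt.le]
  exact h.symm

theorem Module.End.exists_periodic_run {k E ι : Type*} [DivisionRing k] [Infinite k]
    [AddCommGroup E] [Module k E] [Finite ι] (f : Module.End k E) (R : ι → ι → Prop)
    (Y : ι → Set E) (hY : ∀ q, ∃ F : Finset (Submodule k E), Y q = ⋃ W ∈ F, (W : Set E))
    (hstep : ∀ q, ∀ x ∈ Y q, ∃ q', R q q' ∧ f x ∈ Y q') {q₀ : ι} {x₀ : E} (hx₀ : x₀ ∈ Y q₀) :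
    ∃ a s, 0 < s ∧ ∃ u : ℕ → ι, (∀ t, R (u t) (u (t + 1))) ∧ (∀ t, u (t + s) = u t) ∧
      ∀ t, (f ^ t) ((f ^ a) x₀) ∈ Y (u t) := by
  choose F hF using hY
  let Node := Σ q, {W // W ∈ F q}
  have hsub (v : Node) : (v.2.1 : Set E) ⊆ Y v.1 := by
    rw [hF]; exact Set.subset_biUnion_of_mem (u := fun W : Submodule k E => (W : Set E)) v.2.2
  have hnext (v : Node) : ∃ w : Node, R v.1 w.1 ∧ v.2.1.map f ≤ w.2.1 := by
    have hcover : (v.2.1.map f : Set E) ⊆ ⋃ w : {w : Node // R v.1 w.1}, (w.1.2.1 : Set E) := by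
      rintro _ ⟨x, hx, rfl⟩
      obtain ⟨q', hR, hq'⟩ := hstep _ x (hsub v hx)
      rw [hF] at hq'
      simp only [Set.mem_iUnion, SetLike.mem_coe] at hq'
      obtain ⟨W, hW, hxW⟩ := hq'
      exact Set.mem_iUnion.mpr ⟨⟨⟨q', W, hW⟩, hR⟩, hxW⟩
    obtain ⟨w, hw⟩ := Submodule.exists_le_of_coe_subset_iUnion hcover
    exact ⟨w.1, w.2, hw⟩
  choose next hnextR hnextle using hnext
  have horbit (t : ℕ) (v : Node) (x : E) (hx : x ∈ v.2.1) : (f ^ t) x ∈ (next^[t] v).2.1 := by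
    induction t generalizing v x with
    | zero => exact hx
    | succ t ih =>
      rw [pow_succ, Module.End.mul_apply, Function.iterate_succ_apply]
      exact ih _ _ (hnextle v (Submodule.mem_map_of_mem hx))
  obtain ⟨S₀, hS₀, hx₀S₀⟩ : ∃ S₀ ∈ F q₀, x₀ ∈ S₀ := by
    rw [hF] at hx₀; simpa using hx₀
  obtain ⟨a, s, hs, hper⟩ := Function.exists_isPeriodicPt_iterate next ⟨q₀, S₀, hS₀⟩
  refine ⟨a, s, hs, fun t => (next^[t] (next^[a] ⟨q₀, S₀, hS₀⟩)).1, fun t => ?_, fun t => ?_,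
    fun t => hsub _ (horbit t _ _ (horbit a _ _ hx₀S₀))⟩
  · dsimp only
    rw [Function.iterate_succ_apply']
    exact hnextR _
  · dsimp only
    rw [Function.iterate_add_apply, hper.eq]

theorem Matrix.rank_lt_of_mulVec_eq_zero {K m : Type*} [Field K] [Fintype m] {n : ℕ}
    {M : Matrix m (Fin n) K} {x : Fin n → K} (hx : x ≠ 0) (hMx : M *ᵥ x = 0) : M.rank < n := by
  have hker : 0 < Module.finrank K (LinearMap.ker M.mulVecLin) :=
    Module.finrank_pos_iff_exists_ne_zero.mpr ⟨⟨x, hMx⟩, fun h => hx (congrArg Subtype.val h)⟩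
  have := LinearMap.finrank_range_add_finrank_ker M.mulVecLin
  rw [Module.finrank_fin_fun] at this
  rw [rank]
  omega

section UnobservedSet

variable {N n p : ℕ} (A : Matrix (Fin n) (Fin n) ℝ) (C : Matrix (Fin p) (Fin n) ℝ)
  (𝒜 : Automaton N)

/-- `x ∈ unobservedSet A C 𝒜 k q` iff along some path of `𝒜` of length `k` starting at `q`,
the output of the system with initial state `x` vanishes at every observed time. -/
def unobservedSet : ℕ → Fin N → Set (Fin n → ℝ)
  | 0, _ => Set.univ
  | k + 1, q => {x | (𝒜.s q = true → C *ᵥ x = 0) ∧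
      ∃ q', 𝒜.M q q' = true ∧ A *ᵥ x ∈ unobservedSet k q'}

theorem unobservedSet_succ_subset (k : ℕ) (q : Fin N) :
    unobservedSet A C 𝒜 (k + 1) q ⊆ unobservedSet A C 𝒜 k q := by
  induction k generalizing q with
  | zero => exact Set.subset_univ _
  | succ k ih =>
    rintro x ⟨hlabel, q', hq', hx⟩
    exact ⟨hlabel, q', hq', ih q' hx⟩

theorem exists_finset_unobservedSet_eq (k : ℕ) (q : Fin N) :
    ∃ F : Finset (Submodule ℝ (Fin n → ℝ)),
      unobservedSet A C 𝒜 k q = ⋃ W ∈ F, (W : Set (Fin n → ℝ)) := by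
  classical
  induction k generalizing q with
  | zero => exact ⟨{⊤}, by simp [unobservedSet]⟩
  | succ k ih =>
    choose F hF using ih
    let labelKer : Submodule ℝ (Fin n → ℝ) := if 𝒜.s q then LinearMap.ker C.mulVecLin else ⊤
    refine ⟨(Finset.univ.filter (𝒜.M q · = true)).biUnion fun q' =>
      (F q').image fun W => labelKer ⊓ W.comap A.mulVecLin, ?_⟩
    ext x
    simp only [unobservedSet, hF, Set.mem_ofPred_eq, Set.mem_iUnion, SetLike.mem_coe,
      Finset.mem_biUnion, Finset.mem_filter, Finset.mem_univ, true_and, Finset.mem_image]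
    have hlabel : x ∈ labelKer ↔ (𝒜.s q = true → C *ᵥ x = 0) := by
      by_cases h : 𝒜.s q <;> simp [labelKer, h]
    constructor
    · rintro ⟨hl, q', hq', W, hW, hxW⟩
      exact ⟨_, ⟨q', hq', W, hW, rfl⟩, hlabel.mpr hl, hxW⟩
    · rintro ⟨_, ⟨q', hq', W, hW, rfl⟩, hxl, hxW⟩
      exact ⟨hlabel.mp hxl, q', hq', W, hW, hxW⟩

theorem mem_unobservedSet_of_forall {v : ℕ → Fin N} (hv : ∀ t, 𝒜.M (v t) (v (t + 1)) = true)
    {x : Fin n → ℝ} (hx : ∀ t, 𝒜.s (v t) = true → (C * A ^ t) *ᵥ x = 0) (k : ℕ) :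
    x ∈ unobservedSet A C 𝒜 k (v 0) := by
  induction k generalizing v x with
  | zero => trivial
  | succ k ih =>
    refine ⟨by simpa using hx 0, v 1, hv 0, ih (v := fun t => v (t + 1)) (fun t => hv (t + 1))
      fun t ht => ?_⟩
    rw [mulVec_mulVec, Matrix.mul_assoc, ← pow_succ]
    exact hx (t + 1) ht

theorem exists_unobservedSet_succ_eq :
    ∃ K, ∀ q, unobservedSet A C 𝒜 (K + 1) q = unobservedSet A C 𝒜 K q := by
  have hstab (q : Fin N) :
      ∃ T, ∀ k, T ≤ k → unobservedSet A C 𝒜 k q = unobservedSet A C 𝒜 T q := by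
    refine MvPolynomial.antitone_stabilizes_of_zeroLocus_vanishingIdeal_eq
      (antitone_nat_of_succ_le fun k => unobservedSet_succ_subset A C 𝒜 k q) fun k => ?_
    obtain ⟨F, hF⟩ := exists_finset_unobservedSet_eq A C 𝒜 k q
    rw [hF]
    exact MvPolynomial.zeroLocus_vanishingIdeal_biUnion_submodule F id
  choose T hT using hstab
  refine ⟨Finset.univ.sup T, fun q => ?_⟩
  have hTq : T q ≤ Finset.univ.sup T := Finset.le_sup (Finset.mem_univ q)
  rw [hT q _ (hTq.trans (Nat.le_succ _)), hT q _ hTq]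

theorem obsMat_mulVec_eq_zero {σ : ℕ → Bool} {x : Fin n → ℝ}
    (hx : ∀ t, σ t = true → (C * A ^ t) *ᵥ x = 0) (t : ℕ) : obsMat A C σ t *ᵥ x = 0 := by
  ext ⟨i, j⟩
  by_cases hσ : σ i
  · simpa [obsMat, mulVec, dotProduct, hσ] using congrFun (hx i hσ) j
  · simp [obsMat, mulVec, hσ]

end UnobservedSet

/-- If `A` is invertible and `(A,C,𝒜)` is unobservable, then there is a purely periodic
admissible signal `σ ∈ ℒ(𝒜)` of some period `s ≥ 1` whose observability matrices are
rank-deficient for all times. -/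
theorem unobservable_periodic_signal {N n p : ℕ} (A : Matrix (Fin n) (Fin n) ℝ)
    (C : Matrix (Fin p) (Fin n) ℝ) (𝒜 : Automaton N) (hA : IsUnit A.det)
    (hobs : ¬ Observable A C 𝒜) :
    ∃ s : ℕ, 1 ≤ s ∧ ∃ σ : ℕ → Bool, 𝒜.Admissible σ ∧ (∀ t : ℕ, σ (t + s) = σ t) ∧
      ∀ t : ℕ, (obsMat A C σ t).rank < n := by
  simp only [Observable, not_forall, exists_prop] at hobs
  obtain ⟨σ, ⟨v, hv⟩, x₀, hx₀, hx₀_ne⟩ := hobs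
  obtain ⟨K, hK⟩ := exists_unobservedSet_succ_eq A C 𝒜
  have hY (q : Fin N) (x : Fin n → ℝ) (hx : x ∈ unobservedSet A C 𝒜 K q) :
      (𝒜.s q = true → C *ᵥ x = 0) ∧
        ∃ q', 𝒜.M q q' = true ∧ toLinAlgEquiv' A x ∈ unobservedSet A C 𝒜 K q' := by
    rwa [← hK q] at hx
  obtain ⟨a, s, hs, u, hu, hper, horbit⟩ :=
    Module.End.exists_periodic_run (toLinAlgEquiv' A) (𝒜.M · · = true) _
      (exists_finset_unobservedSet_eq A C 𝒜 K) (fun q x hx => (hY q x hx).2)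
      (mem_unobservedSet_of_forall A C 𝒜 (fun t => (hv t).1)
        (fun t ht => hx₀ t (by rwa [(hv t).2])) K)
  simp only [← map_pow, toLinAlgEquiv'_apply] at horbit
  have hx_ne : A ^ a *ᵥ x₀ ≠ 0 := by
    rw [← mulVec_zero (A ^ a)]
    exact (mulVec_injective_iff_isUnit.mpr (((isUnit_iff_isUnit_det A).mpr hA).pow a)).ne hx₀_ne
  refine ⟨s, hs, fun t => 𝒜.s (u t), ⟨u, fun t => ⟨hu t, rfl⟩⟩, fun t => congrArg 𝒜.s (hper t),
    fun t => rank_lt_of_mulVec_eq_zero hx_ne (obsMat_mulVec_eq_zero A C (fun t ht => ?_) t)⟩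
  rw [← mulVec_mulVec]
  exact (hY _ _ (horbit t)).1 ht
end

section
/- Let A ∈ ℝ^{n×n}, C ∈ ℝ^{p×n}, and let σ : ℕ → {0,1} be periodic with period s ≥ 1 (i.e., σ(t+s) = σ(t) for all t ∈ ℕ). Then the observability matrix O_σ(t) has rank strictly less than n for all t ∈ ℕ if and only if O_σ(sn) has rank strictly less than n. Moreover, for all t ≥ sn, the row span of O_σ(t) equals the row span of O_σ(sn). -/
open Matrix Filter

/-!
Let `W t` be the row span of `O_σ(t)`. The rows of block `i + s` are those of block `i` multiplied
by `A ^ s`, so `W (t + s) = W s ⊔ W t · A ^ s`. Hence, as soon as `W (t₀ + s) ≤ W t₀`, the space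
`W t₀` is invariant under `· ᵥ* A ^ s` and the sequence is constant from `t₀` on. Along the chain
`W 0 ≤ W s ≤ W (2s) ≤ ⋯` the dimension cannot grow more than `n` times, so this happens for some
`t₀ = k s` with `k ≤ n`.
-/

theorem Submodule.exists_le_finrank_succ_le_of_monotone {K V : Type*} [DivisionRing K]
    [AddCommGroup V] [Module K V] [FiniteDimensional K V] {F : ℕ → Submodule K V}
    (hF : Monotone F) : ∃ k ≤ Module.finrank K V, F (k + 1) ≤ F k := by
  by_contra! hlt
  have hgrow : ∀ k ≤ Module.finrank K V + 1, k ≤ Module.finrank K (F k) := by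
    intro k
    induction k with
    | zero => exact fun _ => Nat.zero_le _
    | succ k ih =>
      intro hk
      have hstrict : F k < F (k + 1) := lt_of_le_not_ge (hF k.le_succ) (hlt k (by omega))
      have := Submodule.finrank_lt_finrank_of_lt hstrict
      have := ih (by omega)
      omega
  have := hgrow _ le_rfl
  have := Submodule.finrank_le (F (Module.finrank K V + 1))
  omega

theorem Submodule.stabilizes_of_add_le {R M : Type*} [Semiring R] [AddCommMonoid M] [Module R M]
    {W : ℕ → Submodule R M} (hW : Monotone W) {L : M →ₗ[R] M} {s : ℕ} (hs : 1 ≤ s)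
    (hrec : ∀ t, W (t + s) = W s ⊔ (W t).map L) {t₀ : ℕ} (h₀ : W (t₀ + s) ≤ W t₀) {t : ℕ}
    (ht : t₀ ≤ t) : W t = W t₀ := by
  refine le_antisymm ?_ (hW ht)
  induction t using Nat.strong_induction_on with
  | _ t ih =>
    by_cases hts : t ≤ t₀ + s
    · exact (hW hts).trans h₀
    obtain ⟨u, rfl⟩ : ∃ u, t = u + s := ⟨t - s, by omega⟩
    calc W (u + s) = W s ⊔ (W u).map L := hrec u
      _ ≤ W s ⊔ (W t₀).map L := sup_le_sup_left (Submodule.map_mono (ih u (by omega) (by omega))) _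
      _ = W (t₀ + s) := (hrec t₀).symm
      _ ≤ W t₀ := h₀

section ObsMat

variable {n p : ℕ} (A : Matrix (Fin n) (Fin n) ℝ) (C : Matrix (Fin p) (Fin n) ℝ) (σ : ℕ → Bool)

theorem obsMat_apply_row {t : ℕ} (i : Fin t) (r : Fin p) :
    obsMat A C σ t (i, r) = if σ i then (C * A ^ (i : ℕ)) r else 0 := by
  ext k
  simp only [obsMat]
  split_ifs <;> rfl

theorem obsMat_vecMul_pow {s : ℕ} (hper : ∀ t, σ (t + s) = σ t) {t t' : ℕ} (i : Fin t)
    (i' : Fin t') (hi : (i' : ℕ) = i + s) (r : Fin p) :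
    obsMat A C σ t (i, r) ᵥ* A ^ s = obsMat A C σ t' (i', r) := by
  rw [obsMat_apply_row, obsMat_apply_row, hi, hper, pow_add, ← Matrix.mul_assoc]
  split_ifs
  · rfl
  · exact Matrix.zero_vecMul _

theorem range_obsMat_subset {t t' : ℕ} (h : t ≤ t') :
    Set.range (obsMat A C σ t) ⊆ Set.range (obsMat A C σ t') := by
  rintro _ ⟨⟨i, r⟩, rfl⟩
  exact ⟨(Fin.castLE h i, r), rfl⟩

theorem range_obsMat_add {s : ℕ} (hper : ∀ t, σ (t + s) = σ t) (t : ℕ) :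
    Set.range (obsMat A C σ (t + s)) =
      Set.range (obsMat A C σ s) ∪ (A ^ s).vecMulLinear '' Set.range (obsMat A C σ t) := by
  ext v
  constructor
  · rintro ⟨⟨i, r⟩, rfl⟩
    by_cases hi : (i : ℕ) < s
    · exact Or.inl ⟨(⟨i, hi⟩, r), rfl⟩
    · refine Or.inr ⟨_, ⟨(⟨i - s, by omega⟩, r), rfl⟩, ?_⟩
      exact obsMat_vecMul_pow A C σ hper _ _ (Nat.sub_add_cancel (not_lt.mp hi)).symm r
  · rintro (hv | ⟨_, ⟨⟨i, r⟩, rfl⟩, rfl⟩)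
    · exact range_obsMat_subset A C σ (Nat.le_add_left s t) hv
    · exact ⟨(⟨i + s, by omega⟩, r), (obsMat_vecMul_pow A C σ hper _ _ rfl r).symm⟩

theorem span_range_obsMat_mono :
    Monotone fun t => Submodule.span ℝ (Set.range (obsMat A C σ t)) :=
  fun _ _ h => Submodule.span_mono (range_obsMat_subset A C σ h)

theorem span_range_obsMat_add {s : ℕ} (hper : ∀ t, σ (t + s) = σ t) (t : ℕ) :
    Submodule.span ℝ (Set.range (obsMat A C σ (t + s))) =
      Submodule.span ℝ (Set.range (obsMat A C σ s)) ⊔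
        (Submodule.span ℝ (Set.range (obsMat A C σ t))).map (A ^ s).vecMulLinear := by
  rw [range_obsMat_add A C σ hper, Submodule.span_union, Submodule.map_span]

end ObsMat

/-- For a periodic signal `σ` with period `s ≥ 1`: the observability matrices are
rank-deficient for all times iff `O_σ(sn)` is rank-deficient; moreover for all `t ≥ sn`
the row span of `O_σ(t)` equals the row span of `O_σ(sn)`. -/
theorem periodic_obsMat_rank {n p : ℕ} (A : Matrix (Fin n) (Fin n) ℝ)
    (C : Matrix (Fin p) (Fin n) ℝ) (s : ℕ) (hs : 1 ≤ s) (σ : ℕ → Bool)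
    (hper : ∀ t : ℕ, σ (t + s) = σ t) :
    ((∀ t : ℕ, (obsMat A C σ t).rank < n) ↔ (obsMat A C σ (s * n)).rank < n) ∧
    ∀ t : ℕ, s * n ≤ t →
      Submodule.span ℝ (Set.range (obsMat A C σ t)) =
      Submodule.span ℝ (Set.range (obsMat A C σ (s * n))) := by
  set W := fun t => Submodule.span ℝ (Set.range (obsMat A C σ t))
  have hW : Monotone W := span_range_obsMat_mono A C σ
  obtain ⟨k, hk, hk_le⟩ := Submodule.exists_le_finrank_succ_le_of_monotone
    (F := fun k => W (k * s)) fun a b hab => hW (Nat.mul_le_mul_right s hab)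
  rw [Module.finrank_fin_fun] at hk
  rw [add_one_mul] at hk_le
  have hks : k * s ≤ s * n := (Nat.mul_le_mul_right s hk).trans_eq (Nat.mul_comm n s)
  have hconst : ∀ t, k * s ≤ t → W t = W (k * s) := fun _ =>
    Submodule.stabilizes_of_add_le hW hs (span_range_obsMat_add A C σ hper) hk_le
  have hstable : ∀ t, s * n ≤ t → W t = W (s * n) := fun t ht =>
    (hconst t (hks.trans ht)).trans (hconst _ hks).symm
  have hrank : ∀ t, (obsMat A C σ t).rank ≤ (obsMat A C σ (s * n)).rank := fun t => by
    rw [Matrix.rank_eq_finrank_span_row, Matrix.rank_eq_finrank_span_row]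
    calc Module.finrank ℝ (W t) ≤ Module.finrank ℝ (W (max t (s * n))) :=
          Submodule.finrank_mono (hW (le_max_left _ _))
      _ = Module.finrank ℝ (W (s * n)) := by rw [hstable _ (le_max_right _ _)]
  exact ⟨⟨fun h => h _, fun h t => (hrank t).trans_lt h⟩, hstable⟩
end

section
/- Let S ∈ ℝ^{n×n} be an invertible matrix such that S A S⁻¹ = blockdiag(A_r, A_s) and S B = [B_r; B_s], where A_r ∈ ℝ^{r×r} is invertible and A_s ∈ ℝ^{(n−r)×(n−r)} is nilpotent. Then the system (A,B,𝒜) is 0-controllable if and only if the system (A_r, B_r, 𝒜) is 0-controllable. -/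
open Matrix Filter

lemma traj_similar {n m : ℕ} (A : Matrix (Fin n) (Fin n) ℝ) (B : Matrix (Fin n) (Fin m) ℝ)
    (S : Matrix (Fin n) (Fin n) ℝ) (hS : IsUnit S.det) (σ : ℕ → Bool) (u : ℕ → Fin m → ℝ)
    (x₀ : Fin n → ℝ) (t : ℕ) :
    traj (S * A * S⁻¹) (S * B) σ u (S.mulVec x₀) t = S.mulVec (traj A B σ u x₀ t) := by
  induction t with
  | zero => rfl
  | succ t ih =>
    simp only [traj, ih, Matrix.mulVec_add, Matrix.mulVec_mulVec]
    congr 1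
    · rw [Matrix.mul_assoc (S * A), Matrix.nonsing_inv_mul _ hS, Matrix.mul_one]
    · split <;> simp [Matrix.mulVec_mulVec]

lemma zeroControllable_similar {N n m : ℕ} (A : Matrix (Fin n) (Fin n) ℝ)
    (B : Matrix (Fin n) (Fin m) ℝ) (𝒜 : Automaton N) (S : Matrix (Fin n) (Fin n) ℝ)
    (hS : IsUnit S.det) :
    ZeroControllable A B 𝒜 ↔ ZeroControllable (S * A * S⁻¹) (S * B) 𝒜 := by
  constructor
  · intro h σ hσ x₀
    obtain ⟨u, T, hT⟩ := h σ hσ (S⁻¹.mulVec x₀)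
    refine ⟨u, T, ?_⟩
    have h2 := traj_similar A B S hS σ u (S⁻¹.mulVec x₀) T
    rw [Matrix.mulVec_mulVec, Matrix.mul_nonsing_inv _ hS, Matrix.one_mulVec] at h2
    rw [h2, hT, Matrix.mulVec_zero]
  · intro h σ hσ x₀
    obtain ⟨u, T, hT⟩ := h σ hσ (S.mulVec x₀)
    refine ⟨u, T, ?_⟩
    have h2 := traj_similar A B S hS σ u x₀ T
    rw [hT] at h2
    have h3 := congrArg (S⁻¹.mulVec) h2.symm
    rwa [Matrix.mulVec_zero, Matrix.mulVec_mulVec, Matrix.nonsing_inv_mul _ hS,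
      Matrix.one_mulVec] at h3

lemma blockMulVec_inl {r k : ℕ} (Ar : Matrix (Fin r) (Fin r) ℝ) (As : Matrix (Fin k) (Fin k) ℝ)
    (x : Fin (r + k) → ℝ) (i : Fin r) :
    ((Matrix.fromBlocks Ar 0 0 As).submatrix finSumFinEquiv.symm finSumFinEquiv.symm).mulVec x
      (finSumFinEquiv (Sum.inl i)) = Ar.mulVec (fun j => x (finSumFinEquiv (Sum.inl j))) i := by
  simp only [Matrix.mulVec, dotProduct, Matrix.submatrix_apply, Equiv.symm_apply_apply]
  rw [← (finSumFinEquiv (m := r) (n := k)).sum_comp]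
  simp [Fintype.sum_sum_type]

lemma blockMulVec_inr {r k : ℕ} (Ar : Matrix (Fin r) (Fin r) ℝ) (As : Matrix (Fin k) (Fin k) ℝ)
    (x : Fin (r + k) → ℝ) (i : Fin k) :
    ((Matrix.fromBlocks Ar 0 0 As).submatrix finSumFinEquiv.symm finSumFinEquiv.symm).mulVec x
      (finSumFinEquiv (Sum.inr i)) = As.mulVec (fun j => x (finSumFinEquiv (Sum.inr j))) i := by
  simp only [Matrix.mulVec, dotProduct, Matrix.submatrix_apply, Equiv.symm_apply_apply]
  rw [← (finSumFinEquiv (m := r) (n := k)).sum_comp]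
  simp [Fintype.sum_sum_type]

lemma rowsMulVec_inl {r k m : ℕ} (Br : Matrix (Fin r) (Fin m) ℝ) (Bs : Matrix (Fin k) (Fin m) ℝ)
    (u : Fin m → ℝ) (i : Fin r) :
    ((Matrix.fromRows Br Bs).submatrix finSumFinEquiv.symm id).mulVec u
      (finSumFinEquiv (Sum.inl i)) = Br.mulVec u i := by
  simp [Matrix.mulVec, dotProduct]

lemma rowsMulVec_inr {r k m : ℕ} (Br : Matrix (Fin r) (Fin m) ℝ) (Bs : Matrix (Fin k) (Fin m) ℝ)
    (u : Fin m → ℝ) (i : Fin k) :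
    ((Matrix.fromRows Br Bs).submatrix finSumFinEquiv.symm id).mulVec u
      (finSumFinEquiv (Sum.inr i)) = Bs.mulVec u i := by
  simp [Matrix.mulVec, dotProduct]

lemma traj_block_fst {r k m : ℕ} (Ar : Matrix (Fin r) (Fin r) ℝ) (As : Matrix (Fin k) (Fin k) ℝ)
    (Br : Matrix (Fin r) (Fin m) ℝ) (Bs : Matrix (Fin k) (Fin m) ℝ)
    (σ : ℕ → Bool) (u : ℕ → Fin m → ℝ) (x₀ : Fin (r + k) → ℝ) (t : ℕ) (i : Fin r) :
    traj ((Matrix.fromBlocks Ar 0 0 As).submatrix finSumFinEquiv.symm finSumFinEquiv.symm)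
        ((Matrix.fromRows Br Bs).submatrix finSumFinEquiv.symm id) σ u x₀ t
        (finSumFinEquiv (Sum.inl i)) =
      traj Ar Br σ u (fun j => x₀ (finSumFinEquiv (Sum.inl j))) t i := by
  induction t generalizing i with
  | zero => rfl
  | succ t ih =>
    simp only [traj, Pi.add_apply, blockMulVec_inl]
    congr 1
    · congr 1; funext j; exact ih j
    · split <;> simp [← finSumFinEquiv_apply_left, rowsMulVec_inl]

lemma traj_block_snd {r k m : ℕ} (Ar : Matrix (Fin r) (Fin r) ℝ) (As : Matrix (Fin k) (Fin k) ℝ)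
    (Br : Matrix (Fin r) (Fin m) ℝ) (Bs : Matrix (Fin k) (Fin m) ℝ)
    (σ : ℕ → Bool) (u : ℕ → Fin m → ℝ) (x₀ : Fin (r + k) → ℝ) (t : ℕ) (i : Fin k) :
    traj ((Matrix.fromBlocks Ar 0 0 As).submatrix finSumFinEquiv.symm finSumFinEquiv.symm)
        ((Matrix.fromRows Br Bs).submatrix finSumFinEquiv.symm id) σ u x₀ t
        (finSumFinEquiv (Sum.inr i)) =
      traj As Bs σ u (fun j => x₀ (finSumFinEquiv (Sum.inr j))) t i := by
  induction t generalizing i with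
  | zero => rfl
  | succ t ih =>
    simp only [traj, Pi.add_apply, blockMulVec_inr]
    congr 1
    · congr 1; funext j; exact ih j
    · split <;> simp [← finSumFinEquiv_apply_right, rowsMulVec_inr]

lemma traj_congr {n m : ℕ} (A : Matrix (Fin n) (Fin n) ℝ) (B : Matrix (Fin n) (Fin m) ℝ)
    (σ : ℕ → Bool) (u u' : ℕ → Fin m → ℝ) (x₀ : Fin n → ℝ) (t : ℕ)
    (h : ∀ t' < t, u t' = u' t') :
    traj A B σ u x₀ t = traj A B σ u' x₀ t := by
  induction t with
  | zero => rfl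
  | succ t ih =>
    simp only [traj, ih (fun t' ht' => h t' (Nat.lt_succ_of_lt ht')),
      h t (Nat.lt_succ_self t)]

lemma traj_zero_after {n m : ℕ} (A : Matrix (Fin n) (Fin n) ℝ) (B : Matrix (Fin n) (Fin m) ℝ)
    (σ : ℕ → Bool) (u : ℕ → Fin m → ℝ) (x₀ : Fin n → ℝ) (T : ℕ)
    (h : ∀ t' ≥ T, u t' = 0) (j : ℕ) :
    traj A B σ u x₀ (T + j) = (A ^ j).mulVec (traj A B σ u x₀ T) := by
  induction j with
  | zero => simp
  | succ j ih =>
    show traj A B σ u x₀ (T + j + 1) = _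
    simp only [traj, ih, h (T + j) (Nat.le_add_right T j)]
    simp [Matrix.mulVec_mulVec, pow_succ']

/-- With `S A S⁻¹ = blockdiag(A_r, A_s)`, `S B = [B_r; B_s]`, `A_r` invertible and `A_s`
nilpotent: `(A,B,𝒜)` is 0-controllable iff `(A_r,B_r,𝒜)` is 0-controllable. -/
theorem zeroControllable_iff_regular_part {N r k m : ℕ}
    (A : Matrix (Fin (r + k)) (Fin (r + k)) ℝ) (B : Matrix (Fin (r + k)) (Fin m) ℝ)
    (𝒜 : Automaton N) (S : Matrix (Fin (r + k)) (Fin (r + k)) ℝ) (hS : IsUnit S.det)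
    (Ar : Matrix (Fin r) (Fin r) ℝ) (As : Matrix (Fin k) (Fin k) ℝ)
    (Br : Matrix (Fin r) (Fin m) ℝ) (Bs : Matrix (Fin k) (Fin m) ℝ)
    (hA : S * A * S⁻¹ =
      (Matrix.fromBlocks Ar 0 0 As).submatrix finSumFinEquiv.symm finSumFinEquiv.symm)
    (hB : S * B = (Matrix.fromRows Br Bs).submatrix finSumFinEquiv.symm id)
    (hAr : IsUnit Ar.det) (hAs : IsNilpotent As) :
    ZeroControllable A B 𝒜 ↔ ZeroControllable Ar Br 𝒜 := by
  rw [zeroControllable_similar A B 𝒜 S hS, hA, hB]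
  constructor
  · intro h σ hσ x₀r
    obtain ⟨u, T, hT⟩ :=
      h σ hσ (fun j => Sum.elim x₀r (0 : Fin k → ℝ) (finSumFinEquiv.symm j))
    refine ⟨u, T, ?_⟩
    funext i
    have h1 := traj_block_fst Ar As Br Bs σ u
      (fun j => Sum.elim x₀r (0 : Fin k → ℝ) (finSumFinEquiv.symm j)) T i
    simp only [Equiv.symm_apply_apply, Sum.elim_inl] at h1
    rw [← h1, hT]
    rfl
  · intro h σ hσ x₀
    obtain ⟨q, hq⟩ := hAs
    obtain ⟨u, T, hT⟩ := h σ hσ (fun j => x₀ (finSumFinEquiv (Sum.inl j)))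
    set u' : ℕ → Fin m → ℝ := fun t => if t < T then u t else 0 with hu'
    have hzero : ∀ t' ≥ T, u' t' = 0 := by
      intro t' ht'; simp [hu', Nat.not_lt.mpr ht']
    have hagree : ∀ t' < T, u t' = u' t' := by
      intro t' ht'; simp [hu', ht']
    refine ⟨u', T + q, ?_⟩
    have hTr : traj Ar Br σ u' (fun j => x₀ (finSumFinEquiv (Sum.inl j))) T = 0 := by
      rw [← traj_congr Ar Br σ u u' _ T hagree, hT]
    funext j
    obtain ⟨j', rfl⟩ := finSumFinEquiv.surjective j
    show _ = (0 : Fin (r + k) → ℝ) (finSumFinEquiv j')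
    cases j' with
    | inl i =>
      rw [traj_block_fst, traj_zero_after Ar Br σ u' _ T hzero q, hTr]
      simp
    | inr i =>
      rw [traj_block_snd, traj_zero_after As Bs σ u' _ T hzero q, hq]
      simp
end

section
/- The system (A,B,𝒜) is controllable if and only if it is reachable. Moreover, if (A,B,𝒜) is reachable then it is 0-controllable, and if in addition A is invertible, then (A,B,𝒜) is reachable if and only if it is 0-controllable. -/
open Matrix Filter

lemma traj_split {n m : ℕ} (A : Matrix (Fin n) (Fin n) ℝ) (B : Matrix (Fin n) (Fin m) ℝ)
    (σ : ℕ → Bool) (u : ℕ → Fin m → ℝ) (x₀ : Fin n → ℝ) (t : ℕ) :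
    traj A B σ u x₀ t = (A ^ t).mulVec x₀ + traj A B σ u 0 t := by
  induction t with
  | zero => simp [traj]
  | succ t ih =>
      simp only [traj, ih, Matrix.mulVec_add, Matrix.mulVec_mulVec, ← pow_succ']
      abel

lemma traj_add {n m : ℕ} (A : Matrix (Fin n) (Fin n) ℝ) (B : Matrix (Fin n) (Fin m) ℝ)
    (σ : ℕ → Bool) (u v : ℕ → Fin m → ℝ) (t : ℕ) :
    traj A B σ (u + v) 0 t = traj A B σ u 0 t + traj A B σ v 0 t := by
  induction t with
  | zero => simp [traj]
  | succ t ih =>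
      simp only [traj, ih, Matrix.mulVec_add, Pi.add_apply]
      split <;> abel

lemma traj_smul {n m : ℕ} (A : Matrix (Fin n) (Fin n) ℝ) (B : Matrix (Fin n) (Fin m) ℝ)
    (σ : ℕ → Bool) (c : ℝ) (u : ℕ → Fin m → ℝ) (t : ℕ) :
    traj A B σ (c • u) 0 t = c • traj A B σ u 0 t := by
  induction t with
  | zero => simp [traj]
  | succ t ih =>
      simp only [traj, ih, Pi.smul_apply]
      split <;> simp [Matrix.mulVec_smul, smul_add]

/-- The trajectory from `0` as a linear map in the input. -/
noncomputable def trajMap {n m : ℕ} (A : Matrix (Fin n) (Fin n) ℝ)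
    (B : Matrix (Fin n) (Fin m) ℝ) (σ : ℕ → Bool) (t : ℕ) :
    (ℕ → Fin m → ℝ) →ₗ[ℝ] (Fin n → ℝ) where
  toFun u := traj A B σ u 0 t
  map_add' u v := traj_add A B σ u v t
  map_smul' c u := traj_smul A B σ c u t

lemma exists_submodule_eq_top {n : ℕ} (f : ℕ → Submodule ℝ (Fin n → ℝ))
    (h : ∀ x, ∃ t, x ∈ f t) : ∃ t, f t = ⊤ := by
  obtain ⟨t, ht⟩ := nonempty_interior_of_iUnion_of_closed
    (f := fun t => (f t : Set (Fin n → ℝ)))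
    (fun t => (f t).closed_of_finiteDimensional)
    (by ext x; simpa using h x)
  exact ⟨t, Submodule.eq_top_of_nonempty_interior' _ ht⟩


/-- `(A,B,𝒜)` is controllable iff it is reachable; reachability implies
0-controllability; and if `A` is invertible, reachability and 0-controllability are
equivalent. -/
theorem controllable_reachable_zeroControllable {N n m : ℕ} (A : Matrix (Fin n) (Fin n) ℝ)
    (B : Matrix (Fin n) (Fin m) ℝ) (𝒜 : Automaton N) :
    (Controllable A B 𝒜 ↔ Reachable A B 𝒜) ∧
    (Reachable A B 𝒜 → ZeroControllable A B 𝒜) ∧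
    (IsUnit A.det → (Reachable A B 𝒜 ↔ ZeroControllable A B 𝒜)) := by
  have key : Reachable A B 𝒜 → ∀ σ, 𝒜.Admissible σ →
      ∃ T, LinearMap.range (trajMap A B σ T) = ⊤ := by
    intro hR σ hσ
    apply exists_submodule_eq_top
    intro x
    obtain ⟨u, T, hu⟩ := hR σ hσ x
    exact ⟨T, ⟨u, hu⟩⟩
  have RtoC : Reachable A B 𝒜 → Controllable A B 𝒜 := by
    intro hR σ hσ x₀ xf
    obtain ⟨T, hT⟩ := key hR σ hσ
    have hmem : xf - (A ^ T).mulVec x₀ ∈ LinearMap.range (trajMap A B σ T) := by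
      rw [hT]; trivial
    obtain ⟨u, hu⟩ := hmem
    refine ⟨u, T, ?_⟩
    rw [traj_split]
    rw [show traj A B σ u 0 T = xf - (A ^ T).mulVec x₀ from hu]
    abel
  refine ⟨⟨fun hC σ hσ xf => hC σ hσ 0 xf, RtoC⟩,
    fun hR σ hσ x₀ => (RtoC hR) σ hσ x₀ 0, fun hA => ?_⟩
  refine ⟨fun hR σ hσ x₀ => (RtoC hR) σ hσ x₀ 0, fun hZ σ hσ xf => ?_⟩
  have hex : ∃ T, Submodule.comap (Matrix.mulVecLin (A ^ T))
      (LinearMap.range (trajMap A B σ T)) = ⊤ := by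
    apply exists_submodule_eq_top
    intro x
    obtain ⟨u, T, hu⟩ := hZ σ hσ x
    refine ⟨T, Submodule.mem_comap.2 ⟨-u, ?_⟩⟩
    rw [traj_split] at hu
    have h0 : traj A B σ u 0 T = -((A ^ T).mulVec x) :=
      eq_neg_of_add_eq_zero_right hu
    show traj A B σ (-u) 0 T = (A ^ T).mulVec x
    have := map_neg (trajMap A B σ T) u
    simp only [trajMap, LinearMap.coe_mk, AddHom.coe_mk] at this
    rw [this, h0, neg_neg]
  obtain ⟨T, hT⟩ := hex
  have hdet : IsUnit (A ^ T).det := by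
    rw [Matrix.det_pow]; exact hA.pow T
  set y := (A ^ T)⁻¹.mulVec xf with hy
  have hAy : (A ^ T).mulVec y = xf := by
    rw [hy, Matrix.mulVec_mulVec, Matrix.mul_nonsing_inv _ hdet, Matrix.one_mulVec]
  have hmem : y ∈ Submodule.comap (Matrix.mulVecLin (A ^ T))
      (LinearMap.range (trajMap A B σ T)) := by rw [hT]; trivial
  obtain ⟨u, hu⟩ := Submodule.mem_comap.1 hmem
  refine ⟨u, T, ?_⟩
  show traj A B σ u 0 T = xf
  rw [show traj A B σ u 0 T = Matrix.mulVecLin (A ^ T) y from hu,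
    Matrix.mulVecLin_apply, hAy]
end

section
/- Let A ∈ ℝ^{n×n} be invertible and B ∈ ℝ^{n×m}. The following statements are equivalent: (1) there exists a signal σ ∈ ℒ(𝒜) such that for all t ∈ ℕ the reachability matrix C_σ(t) has rank strictly less than n; (2) there exists a sequence of finite words w_i ∈ 𝒲(𝒜), where w_i has length i for every integer i ≥ 1, such that the reachability matrix C_{w_i}(i) has rank strictly less than n for every i ≥ 1. -/
open Matrix Filter

/-!
If `σ` and `τ` agree before time `t ≤ i`, then `A ^ (i - t) * C_σ(t)` is the matrix formed by the
last `t` block columns of `C_τ(i)`; for invertible `A` this gives `rank C_σ(t) ≤ rank C_τ(i)`.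
Given rank-deficient admissible words of every length, a compactness (König) argument, taking
coordinatewise limits of their runs along a non-principal ultrafilter, yields an admissible
signal each of whose prefixes is a prefix of words of arbitrarily large length; by the rank
inequality all its reachability matrices are rank-deficient.
-/

theorem rank_reachMat_le_of_prefix_eq {n m : ℕ} {A : Matrix (Fin n) (Fin n) ℝ}
    (hA : IsUnit A.det) (B : Matrix (Fin n) (Fin m) ℝ) {σ τ : ℕ → Bool} {t i : ℕ}
    (hti : t ≤ i) (hστ : ∀ s < t, σ s = τ s) :
    (reachMat A B σ t).rank ≤ (reachMat A B τ i).rank := by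
  let shift : Fin t × Fin m → Fin i × Fin m := fun jl => (⟨jl.1 + (i - t), by omega⟩, jl.2)
  have hshift : A ^ (i - t) * reachMat A B σ t = (reachMat A B τ i).submatrix id shift := by
    ext k ⟨j, l⟩
    have hj : i - 1 - (j + (i - t)) = t - 1 - j := by omega
    rw [mul_apply]
    simp only [reachMat, submatrix_apply, id_eq, shift, hj, ← hστ _ (by omega : t - 1 - j < t)]
    split_ifs
    · rw [add_comm, pow_add, Matrix.mul_assoc, mul_apply]
    · simp
  calc (reachMat A B σ t).rank = (A ^ (i - t) * reachMat A B σ t).rank :=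
        (rank_mul_eq_right_of_isUnit_det _ _ (by rw [det_pow]; exact hA.pow _)).symm
    _ ≤ (reachMat A B τ i).rank := hshift ▸ rank_submatrix_le _ _ _

theorem exists_forall_frequently_prefix_eq {α : Type*} [Finite α] (V : ℕ → ℕ → α) :
    ∃ v : ℕ → α, ∀ t, ∃ᶠ i in atTop, ∀ s < t, V i s = v s := by
  set U := hyperfilter ℕ
  choose v hv using fun t => Ultrafilter.eq_pure_of_finite (U.map fun i => V i t)
  have hcoord : ∀ t, ∀ᶠ i in (U : Filter ℕ), V i t = v t := fun t =>
    (Ultrafilter.mem_map (s := {v t})).1 (hv t ▸ Ultrafilter.mem_pure.2 rfl)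
  refine ⟨v, fun t => ?_⟩
  have hprefix : ∀ᶠ i in (U : Filter ℕ), ∀ s < t, V i s = v s :=
    (eventually_all_finite (Set.finite_Iio t)).2 fun s _ => hcoord s
  exact hprefix.frequently.filter_mono (hyperfilter_le_cofinite.trans Nat.cofinite_eq_atTop.le)

theorem Automaton.Admissible.admissibleWord {N : ℕ} {𝒜 : Automaton N} {σ : ℕ → Bool}
    (hσ : 𝒜.Admissible σ) (r : ℕ) : 𝒜.AdmissibleWord r σ :=
  let ⟨v, hv⟩ := hσ
  ⟨v, fun t _ => (hv t).1, fun t _ => (hv t).2⟩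

theorem Automaton.exists_admissible_forall_frequently_prefix_eq {N : ℕ} (𝒜 : Automaton N)
    {w : ℕ → ℕ → Bool} {r : ℕ → ℕ} (hr : Tendsto r atTop atTop)
    (hw : ∀ i, 𝒜.AdmissibleWord (r i) (w i)) :
    ∃ σ, 𝒜.Admissible σ ∧ ∀ t, ∃ᶠ i in atTop, t ≤ r i ∧ ∀ s < t, w i s = σ s := by
  choose V hVM hVs using hw
  obtain ⟨v, hv⟩ := exists_forall_frequently_prefix_eq V
  have hrun : ∀ t, ∃ᶠ i in atTop, t ≤ r i ∧ ∀ s < t, V i s = v s := fun t =>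
    ((hv t).and_eventually (hr.eventually_ge_atTop t)).mono fun _ h => ⟨h.2, h.1⟩
  refine ⟨fun t => 𝒜.s (v t), ⟨v, fun t => ⟨?_, rfl⟩⟩, fun t => (hrun t).mono ?_⟩
  · obtain ⟨i, hti, hVv⟩ := (hrun (t + 2)).exists
    rw [← hVv t (by omega), ← hVv (t + 1) (by omega)]
    exact hVM i t (by omega)
  · rintro i ⟨hti, hVv⟩
    exact ⟨hti, fun s hs => (hVs i s (by omega)).trans (congrArg 𝒜.s (hVv s hs))⟩

/-- For `A` invertible: there is an admissible infinite signal whose reachability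
matrices are always rank-deficient iff for every `i ≥ 1` there is an admissible finite
word of length `i` whose reachability matrix at time `i` is rank-deficient. -/
theorem inf_signal_iff_finite_words {N n m : ℕ} (A : Matrix (Fin n) (Fin n) ℝ)
    (B : Matrix (Fin n) (Fin m) ℝ) (𝒜 : Automaton N) (hA : IsUnit A.det) :
    (∃ σ : ℕ → Bool, 𝒜.Admissible σ ∧ ∀ t : ℕ, (reachMat A B σ t).rank < n) ↔
    (∃ w : ℕ → (ℕ → Bool), ∀ i : ℕ, 1 ≤ i →
      𝒜.AdmissibleWord i (w i) ∧ (reachMat A B (w i) i).rank < n) := by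
  constructor
  · rintro ⟨σ, hσ, hrank⟩
    exact ⟨fun _ => σ, fun i _ => ⟨hσ.admissibleWord i, hrank i⟩⟩
  · rintro ⟨w, hw⟩
    obtain ⟨σ, hσ, hprefix⟩ := 𝒜.exists_admissible_forall_frequently_prefix_eq
      (w := fun i => w (i + 1)) (tendsto_add_atTop_nat 1) fun i => (hw (i + 1) (by omega)).1
    refine ⟨σ, hσ, fun t => ?_⟩
    obtain ⟨i, hti, hwσ⟩ := (hprefix t).exists
    calc (reachMat A B σ t).rank ≤ (reachMat A B (w (i + 1)) (i + 1)).rank :=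
          rank_reachMat_le_of_prefix_eq hA B hti fun s hs => (hwσ s hs).symm
      _ < n := (hw (i + 1) (by omega)).2
end

section
/- If the system (A,C,𝒜) is observable, then the dual system (Aᵀ, Cᵀ, 𝒜ʳ) is controllable. Moreover, if A is invertible, then the converse also holds: (A,C,𝒜) is observable if and only if (Aᵀ, Cᵀ, 𝒜ʳ) is controllable. -/
open Matrix Filter

section Lemmas
open Matrix Filter

lemma traj_formula {n m : ℕ} (A : Matrix (Fin n) (Fin n) ℝ) (B : Matrix (Fin n) (Fin m) ℝ)
    (σ : ℕ → Bool) (u : ℕ → Fin m → ℝ) (x₀ : Fin n → ℝ) (t : ℕ) :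
    traj A B σ u x₀ t = (A ^ t).mulVec x₀ +
      ∑ j ∈ Finset.range t, (if σ j then ((A ^ (t - 1 - j)) * B).mulVec (u j) else 0) := by
  induction t with
  | zero => simp [traj]
  | succ t ih =>
    rw [traj, ih, Finset.sum_range_succ, Matrix.mulVec_add]
    have hmap : A.mulVec (∑ j ∈ Finset.range t,
        (if σ j then ((A ^ (t - 1 - j)) * B).mulVec (u j) else 0)) =
        ∑ j ∈ Finset.range t, A.mulVec (if σ j then ((A ^ (t - 1 - j)) * B).mulVec (u j) else 0) :=
      map_sum A.mulVecLin _ _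
    rw [hmap]
    have h1 : A.mulVec ((A ^ t).mulVec x₀) = (A ^ (t+1)).mulVec x₀ := by
      rw [Matrix.mulVec_mulVec, ← pow_succ']
    have h2 : ∀ j ∈ Finset.range t,
        A.mulVec (if σ j then ((A ^ (t - 1 - j)) * B).mulVec (u j) else 0) =
        (if σ j then ((A ^ (t + 1 - 1 - j)) * B).mulVec (u j) else 0) := by
      intro j hj
      have hj' : j < t := Finset.mem_range.mp hj
      have hA : A * A ^ (t - 1 - j) = A ^ (t + 1 - 1 - j) := by
        rw [← pow_succ']
        congr 1
        omega
      rw [apply_ite A.mulVec, Matrix.mulVec_zero, Matrix.mulVec_mulVec, ← Matrix.mul_assoc, hA]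
    rw [Finset.sum_congr rfl h2, h1]
    have h3 : (if σ t then B.mulVec (u t) else 0) =
        (if σ t then ((A ^ (t + 1 - 1 - t)) * B).mulVec (u t) else 0) := by
      simp
    rw [h3]
    abel

lemma obsMat_mulVec_eq_zero_iff {n p : ℕ} (A : Matrix (Fin n) (Fin n) ℝ)
    (C : Matrix (Fin p) (Fin n) ℝ) (w : ℕ → Bool) (T : ℕ) (z : Fin n → ℝ) :
    (obsMat A C w T).mulVec z = 0 ↔
      ∀ i : ℕ, i < T → w i = true → (C * A ^ i).mulVec z = 0 := by
  constructor
  · intro h i hi hw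
    funext l
    have := congrFun h (⟨i, hi⟩, l)
    simpa [obsMat, Matrix.mulVec, dotProduct, hw] using this
  · intro h
    funext il
    obtain ⟨i, l⟩ := il
    by_cases hw : w (i : ℕ)
    · have := congrFun (h i i.isLt hw) l
      simpa [obsMat, Matrix.mulVec, dotProduct, hw] using this
    · simp [obsMat, Matrix.mulVec, dotProduct, hw]

lemma obsMat_transpose_mulVec {n p : ℕ} (A : Matrix (Fin n) (Fin n) ℝ)
    (C : Matrix (Fin p) (Fin n) ℝ) (w : ℕ → Bool) (T : ℕ) (ω : Fin T × Fin p → ℝ) :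
    (obsMat A C w T)ᵀ.mulVec ω =
      ∑ i : Fin T, (if w (i : ℕ) then ((Aᵀ ^ (i : ℕ) * Cᵀ)).mulVec (fun l => ω (i, l)) else 0) := by
  funext k
  rw [Finset.sum_apply]
  simp only [Matrix.mulVec, dotProduct, Matrix.transpose_apply, obsMat, Fintype.sum_prod_type]
  refine Finset.sum_congr rfl fun i _ => ?_
  have ht : Aᵀ ^ (i : ℕ) * Cᵀ = (C * A ^ (i : ℕ))ᵀ := by
    rw [← Matrix.transpose_pow, ← Matrix.transpose_mul]
  by_cases hw : w (i : ℕ) <;> simp [hw, ht, Matrix.mulVec, dotProduct]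

end Lemmas

lemma exists_limit_path {N : ℕ} (v : ℕ → Fin N) (U : Ultrafilter ℕ) :
    ∃ pp : ℕ → Fin N, ∀ j : ℕ, {k | v (k - j) = pp j} ∈ U := by
  have h : ∀ j : ℕ, ∃ a : Fin N, {k | v (k - j) = a} ∈ U := by
    intro j
    haveI : Finite (Fin N) := inferInstance
    obtain ⟨a, ha⟩ := Ultrafilter.eq_pure_of_finite (U.map (fun k => v (k - j)))
    refine ⟨a, ?_⟩
    have : {a} ∈ U.map (fun k => v (k - j)) := by rw [ha]; exact Filter.mem_pure.mpr rfl
    simpa [Ultrafilter.mem_map, Set.preimage, Set.mem_singleton_iff] using this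
  choose pp hpp using h
  exact ⟨pp, hpp⟩

lemma traj_dual {n p : ℕ} (A : Matrix (Fin n) (Fin n) ℝ) (C : Matrix (Fin p) (Fin n) ℝ)
    (σ' : ℕ → Bool) (u : ℕ → Fin p → ℝ) (x₀ : Fin n → ℝ) (T : ℕ) :
    traj Aᵀ Cᵀ σ' u x₀ T = (Aᵀ ^ T).mulVec x₀ +
      (obsMat A C (fun i => σ' (T - 1 - i)) T)ᵀ.mulVec
        (fun il => u (T - 1 - (il.1 : ℕ)) il.2) := by
  rw [traj_formula, obsMat_transpose_mulVec]
  congr 1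
  have hfin : (∑ i : Fin T, (if σ' (T - 1 - (i : ℕ)) then
      (Aᵀ ^ (i : ℕ) * Cᵀ).mulVec (fun l => u (T - 1 - (i : ℕ)) l) else 0)) =
      ∑ i ∈ Finset.range T, (if σ' (T - 1 - i) then
      (Aᵀ ^ i * Cᵀ).mulVec (u (T - 1 - i)) else 0) :=
    Fin.sum_univ_eq_sum_range
      (fun i => if σ' (T - 1 - i) then (Aᵀ ^ i * Cᵀ).mulVec (u (T - 1 - i)) else 0) T
  rw [hfin, ← Finset.sum_range_reflect]
  refine Finset.sum_congr rfl fun j hj => ?_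
  have hj' : j < T := Finset.mem_range.mp hj
  have h1 : T - 1 - (T - 1 - j) = j := by omega
  rw [h1]

lemma surj_of_ker {n : ℕ} {ι : Type*} [Fintype ι] (O : Matrix ι (Fin n) ℝ) :
    (∀ z : Fin n → ℝ, O.mulVec z = 0 → z = 0) ↔ Function.Surjective Oᵀ.mulVec := by
  have hrn : Module.finrank ℝ (Fin n → ℝ) = n := by simp
  constructor
  · intro h
    have hker : LinearMap.ker O.mulVecLin = ⊥ := by
      rw [LinearMap.ker_eq_bot']
      intro z hz
      exact h z hz
    have hrank : O.rank = n := by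
      have := O.mulVecLin.finrank_range_add_finrank_ker
      rw [hker, finrank_bot, add_zero, hrn] at this
      exact this
    have hrt : Oᵀ.rank = n := by rw [Matrix.rank_transpose, hrank]
    have : LinearMap.range Oᵀ.mulVecLin = ⊤ :=
      Submodule.eq_top_of_finrank_eq
        (by rw [show Module.finrank ℝ ↥(LinearMap.range Oᵀ.mulVecLin) = Oᵀ.rank from rfl,
              hrt, hrn])
    intro y
    exact LinearMap.range_eq_top.mp this y
  · intro h z hz
    have hrt : Oᵀ.rank = n := by
      rw [Matrix.rank, LinearMap.range_eq_top.mpr h, finrank_top, hrn]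
    have hrank : O.rank = n := by rw [← Matrix.rank_transpose, hrt]
    have h2 := O.mulVecLin.finrank_range_add_finrank_ker
    rw [hrn, show Module.finrank ℝ ↥(LinearMap.range O.mulVecLin) = O.rank from rfl,
      hrank] at h2
    have hker : Module.finrank ℝ (LinearMap.ker O.mulVecLin) = 0 := by omega
    have h3 : LinearMap.ker O.mulVecLin = ⊥ := Submodule.finrank_eq_zero.mp hker
    exact LinearMap.ker_eq_bot'.mp h3 z hz

lemma forward_core {N n p : ℕ} (A : Matrix (Fin n) (Fin n) ℝ) (C : Matrix (Fin p) (Fin n) ℝ)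
    (𝒜 : Automaton N) (hObs : Observable A C 𝒜) (σ' : ℕ → Bool)
    (hσ' : 𝒜.rev.Admissible σ') :
    ∃ T : ℕ, ∀ z : Fin n → ℝ,
      (obsMat A C (fun i => σ' (T - 1 - i)) T).mulVec z = 0 → z = 0 := by
  by_contra hcon
  push_neg at hcon
  have h : ∀ T : ℕ, ∃ z : Fin n → ℝ, z ≠ 0 ∧
      ∀ i : ℕ, i < T → σ' (T - 1 - i) = true → (C * A ^ i).mulVec z = 0 := by
    intro T
    obtain ⟨z, hz1, hz2⟩ := hcon T
    exact ⟨z, hz2, (obsMat_mulVec_eq_zero_iff A C _ T z).mp hz1⟩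
  obtain ⟨v, hv⟩ := hσ'
  -- unit-norm kernel witnesses
  have hz : ∀ k : ℕ, ∃ z : Fin n → ℝ, ‖z‖ = 1 ∧
      ∀ i : ℕ, i ≤ k → σ' (k - i) = true → (C * A ^ i).mulVec z = 0 := by
    intro k
    obtain ⟨w, hw0, hw⟩ := h (k + 1)
    refine ⟨‖w‖⁻¹ • w, ?_, ?_⟩
    · rw [norm_smul, norm_inv, norm_norm, inv_mul_cancel₀ (norm_ne_zero_iff.mpr hw0)]
    · intro i hi hσi
      have : (k + 1) - 1 - i = k - i := by omega
      rw [Matrix.mulVec_smul, hw i (by omega) (by rw [this]; exact hσi), smul_zero]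
  choose z hz1 hz2 using hz
  set U : Ultrafilter ℕ := Ultrafilter.of atTop with hU
  have hUat : (U : Filter ℕ) ≤ atTop := Ultrafilter.of_le atTop
  obtain ⟨pp, hpp⟩ := exists_limit_path v U
  -- the limit signal is admissible for 𝒜
  have hedge : ∀ t : ℕ, 𝒜.M (pp t) (pp (t + 1)) = true := by
    intro t
    have hmem : {k | v (k - t) = pp t} ∩ ({k | v (k - (t + 1)) = pp (t + 1)} ∩
        {k | t + 1 ≤ k}) ∈ U :=
      Filter.inter_mem (hpp t) (Filter.inter_mem (hpp (t + 1)) (hUat (Filter.mem_atTop (t + 1))))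
    obtain ⟨k, hk1, hk2, hk3⟩ := Ultrafilter.nonempty_of_mem hmem
    have hk3' : t + 1 ≤ k := hk3
    have hrev := (hv (k - (t + 1))).1
    have harith : k - (t + 1) + 1 = k - t := by omega
    rw [harith] at hrev
    -- hrev : 𝒜.rev.M (v (k - (t+1))) (v (k - t)) = true
    have : 𝒜.M (v (k - t)) (v (k - (t + 1))) = true := hrev
    rwa [hk1, hk2] at this
  set σ : ℕ → Bool := fun j => 𝒜.s (pp j) with hσdef
  have hadm : 𝒜.Admissible σ := ⟨pp, fun t => ⟨hedge t, rfl⟩⟩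
  -- ultrafilter limit of the unit witnesses
  have hsub : ∀ k : ℕ, z k ∈ Metric.sphere (0 : Fin n → ℝ) 1 := by
    intro k
    rw [mem_sphere_zero_iff_norm]
    exact hz1 k
  have hcomp : IsCompact (Metric.sphere (0 : Fin n → ℝ) 1) := isCompact_sphere 0 1
  have hle : (U.map z : Filter (Fin n → ℝ)) ≤ Filter.principal (Metric.sphere 0 1) := by
    rw [Filter.le_principal_iff]
    exact Filter.mem_map.mpr (Filter.univ_mem' hsub)
  obtain ⟨x₀, hx₀s, hx₀lim⟩ := hcomp.ultrafilter_le_nhds (U.map z) hle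
  have htend : Filter.Tendsto z (U : Filter ℕ) (nhds x₀) := hx₀lim
  -- x₀ is annihilated along σ
  have hker : ∀ t : ℕ, σ t = true → (C * A ^ t).mulVec x₀ = 0 := by
    intro t ht
    have hclosed : IsClosed {y : Fin n → ℝ | (C * A ^ t).mulVec y = 0} := by
      have : Continuous fun y : Fin n → ℝ => (C * A ^ t).mulVec y :=
        (C * A ^ t).mulVecLin.continuous_of_finiteDimensional
      exact isClosed_eq this continuous_const
    have hev : ∀ᶠ k in (U : Filter ℕ), z k ∈ {y | (C * A ^ t).mulVec y = 0} := by
      have hmem : {k | v (k - t) = pp t} ∩ {k | t ≤ k} ∈ U :=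
        Filter.inter_mem (hpp t) (hUat (Filter.mem_atTop t))
      refine Filter.mem_of_superset hmem ?_
      rintro k ⟨hk1, hk2⟩
      have hk2' : t ≤ k := hk2
      have hσ' : σ' (k - t) = true := by
        have := (hv (k - t)).2
        rw [this, hk1]
        exact ht
      exact hz2 k t hk2' hσ'
    have := hclosed.mem_of_tendsto htend hev
    exact this
  have : x₀ = 0 := hObs σ hadm x₀ hker
  rw [mem_sphere_zero_iff_norm] at hx₀s
  rw [this, norm_zero] at hx₀s
  exact one_ne_zero hx₀s.symm

lemma forward_dir {N n p : ℕ} (A : Matrix (Fin n) (Fin n) ℝ) (C : Matrix (Fin p) (Fin n) ℝ)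
    (𝒜 : Automaton N) (hObs : Observable A C 𝒜) :
    Controllable A.transpose C.transpose 𝒜.rev := by
  intro σ' hσ' x₀ xf
  obtain ⟨T, hker⟩ := forward_core A C 𝒜 hObs σ' hσ'
  have hsurj := (surj_of_ker (obsMat A C (fun i => σ' (T - 1 - i)) T)).mp hker
  obtain ⟨ω, hω⟩ := hsurj (xf - (Aᵀ ^ T).mulVec x₀)
  refine ⟨fun j l => if h : T - 1 - j < T then ω (⟨T - 1 - j, h⟩, l) else 0, T, ?_⟩
  rw [traj_dual]
  have heq : (fun il : Fin T × Fin p =>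
      (fun j l => if h : T - 1 - j < T then ω (⟨T - 1 - j, h⟩, l) else 0)
        (T - 1 - (il.1 : ℕ)) il.2) = ω := by
    funext il
    obtain ⟨i, l⟩ := il
    have hi : (i : ℕ) < T := i.isLt
    have h1 : T - 1 - (T - 1 - (i : ℕ)) < T := by omega
    simp only
    rw [dif_pos h1]
    congr 1
    have : (⟨T - 1 - (T - 1 - (i : ℕ)), h1⟩ : Fin T) = i := by
      apply Fin.ext
      simp only
      omega
    rw [this]
  rw [heq, hω, add_sub_cancel]

lemma converse_dir {N n p : ℕ} (A : Matrix (Fin n) (Fin n) ℝ) (C : Matrix (Fin p) (Fin n) ℝ)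
    (𝒜 : Automaton N) (hInv : IsUnit A.det)
    (hCtrl : Controllable A.transpose C.transpose 𝒜.rev) : Observable A C 𝒜 := by
  intro σ hσ x₀ hx
  obtain ⟨v, hv⟩ := hσ
  set U : Ultrafilter ℕ := Ultrafilter.of atTop with hU
  have hUat : (U : Filter ℕ) ≤ atTop := Ultrafilter.of_le atTop
  obtain ⟨pp, hpp⟩ := exists_limit_path v U
  -- the limit signal is admissible for the reverse automaton
  have hedge : ∀ t : ℕ, 𝒜.rev.M (pp t) (pp (t + 1)) = true := by
    intro t
    have hmem : {k | v (k - t) = pp t} ∩ ({k | v (k - (t + 1)) = pp (t + 1)} ∩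
        {k | t + 1 ≤ k}) ∈ U :=
      Filter.inter_mem (hpp t) (Filter.inter_mem (hpp (t + 1)) (hUat (Filter.mem_atTop (t + 1))))
    obtain ⟨k, hk1, hk2, hk3⟩ := Ultrafilter.nonempty_of_mem hmem
    have hk3' : t + 1 ≤ k := hk3
    have hfwd := (hv (k - (t + 1))).1
    have harith : k - (t + 1) + 1 = k - t := by omega
    rw [harith] at hfwd
    -- hfwd : 𝒜.M (v (k - (t+1))) (v (k - t)) = true
    show 𝒜.M.transpose (pp t) (pp (t + 1)) = true
    rw [Matrix.transpose_apply, ← hk1, ← hk2]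
    exact hfwd
  set σ'' : ℕ → Bool := fun j => 𝒜.s (pp j) with hσ''def
  have hadm : 𝒜.rev.Admissible σ'' := ⟨pp, fun t => ⟨hedge t, rfl⟩⟩
  -- Baire-category argument: some reachability subspace is everything
  set V : ℕ → Submodule ℝ (Fin n → ℝ) := fun T =>
    LinearMap.range ((obsMat A C (fun i => σ'' (T - 1 - i)) T)ᵀ.mulVecLin) with hV
  have hcover : (⋃ T : ℕ, (V T : Set (Fin n → ℝ))) = Set.univ := by
    rw [Set.eq_univ_iff_forall]
    intro xf
    obtain ⟨u, T, hT⟩ := hCtrl σ'' hadm 0 xf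
    rw [traj_dual, Matrix.mulVec_zero, zero_add] at hT
    exact Set.mem_iUnion.mpr ⟨T, ⟨_, hT⟩⟩
  have hclosed : ∀ T : ℕ, IsClosed ((V T : Set (Fin n → ℝ))) := fun T =>
    Submodule.closed_of_finiteDimensional (V T)
  obtain ⟨T, hint⟩ := nonempty_interior_of_iUnion_of_closed hclosed hcover
  have htop : V T = ⊤ := Submodule.eq_top_of_nonempty_interior' (V T) hint
  -- hence the corresponding observability kernel is trivial
  have hsurj : Function.Surjective (obsMat A C (fun i => σ'' (T - 1 - i)) T)ᵀ.mulVec :=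
    LinearMap.range_eq_top.mp htop
  have hker := (surj_of_ker (obsMat A C (fun i => σ'' (T - 1 - i)) T)).mpr hsurj
  -- pick a single anchor time k
  have hmem : (⋂ j ∈ Finset.range T, {k | v (k - j) = pp j}) ∩ {k | T ≤ k} ∈ U := by
    refine Filter.inter_mem ?_ (hUat (Filter.mem_atTop T))
    exact (Filter.biInter_finset_mem (Finset.range T)).mpr fun j _ => hpp j
  obtain ⟨k, hk1, hk2⟩ := Ultrafilter.nonempty_of_mem hmem
  have hk2' : T ≤ k := hk2
  have hk1' : ∀ j : ℕ, j < T → v (k - j) = pp j := by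
    intro j hj
    have := Set.mem_iInter₂.mp hk1 j (Finset.mem_range.mpr hj)
    exact this
  -- apply kernel triviality to A^(k+1-T) x₀
  have hz : (A ^ (k + 1 - T)).mulVec x₀ = 0 := by
    apply hker
    rw [obsMat_mulVec_eq_zero_iff]
    intro i hi hσi
    have hj : T - 1 - i < T := by omega
    have hv2 := (hv (k - (T - 1 - i))).2
    have hσk : σ (k - (T - 1 - i)) = true := by
      rw [hv2, hk1' (T - 1 - i) hj]
      exact hσi
    have hx2 := hx (k - (T - 1 - i)) hσk
    have harith : i + (k + 1 - T) = k - (T - 1 - i) := by omega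
    rw [Matrix.mulVec_mulVec, Matrix.mul_assoc, ← pow_add, harith]
    exact hx2
  have hunit : IsUnit (A ^ (k + 1 - T)) := (Matrix.isUnit_iff_isUnit_det A).mpr hInv |>.pow _
  have hinj : Function.Injective (A ^ (k + 1 - T)).mulVec :=
    Matrix.mulVec_injective_iff_isUnit.mpr hunit
  have := hinj (a₁ := x₀) (a₂ := 0)
  rw [Matrix.mulVec_zero] at this
  exact this hz

/-- If `(A,C,𝒜)` is observable, then the dual system `(Aᵀ, Cᵀ, 𝒜ʳ)` is controllable;
if moreover `A` is invertible, the two properties are equivalent. -/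
theorem observable_dual_controllable {N n p : ℕ} (A : Matrix (Fin n) (Fin n) ℝ)
    (C : Matrix (Fin p) (Fin n) ℝ) (𝒜 : Automaton N) :
    (Observable A C 𝒜 → Controllable A.transpose C.transpose 𝒜.rev) ∧
    (IsUnit A.det →
      (Observable A C 𝒜 ↔ Controllable A.transpose C.transpose 𝒜.rev)) := by
  exact ⟨forward_dir A C 𝒜 (p := p), fun hInv =>
    ⟨forward_dir A C 𝒜 (p := p), converse_dir A C 𝒜 hInv⟩⟩
end
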